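/- arXiv:0806.1012 — 10 statements merged into one kernel-verified Lean document; each statement's English description precedes it below -/
import Mathlib

section
/- Let A : [0,1]² → ℝ be continuous. The family of functions { (1/β) log φ_β : β > 1 }, where φ_β is the positive normalized eigenfunction of L_β, is equicontinuous; moreover, for any y,z ∈ [0,1], if |A(x,y) − A(x,z)| < ε for all x then |(1/β)log φ_β(y) − (1/β)log φ_β(z)| ≤ ε. -/
/-!
If `|A(x, y) - A(x, z)| ≤ ε` for all `x`, then the kernels satisfy
`e^{βA(x,y)} ≤ e^{βε} e^{βA(x,z)}`, so integrating against `φ_β > 0` and using the eigenvalue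
equation gives `φ_β(y) ≤ e^{βε} φ_β(z)`; the eigenvalue cancels because it is positive.
Taking `(1/β) log` turns this into `(1/β) log φ_β(y) - (1/β) log φ_β(z) ≤ ε`, uniformly in `β`.
As `A` is uniformly continuous on the compact square, this is a common modulus of continuity.
-/

open MeasureTheory unitInterval Real

section
variable {X : Type*} [MeasurableSpace X] {μ : Measure X}

theorem integral_exp_mul_le_exp_mul_integral_exp_mul {f g φ : X → ℝ} {β ε : ℝ} (hβ : 0 ≤ β)
    (hφ : ∀ x, 0 ≤ φ x) (hf : Integrable (fun x => exp (β * f x) * φ x) μ)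
    (hg : Integrable (fun x => exp (β * g x) * φ x) μ) (hfg : ∀ x, f x ≤ g x + ε) :
    ∫ x, exp (β * f x) * φ x ∂μ ≤ exp (β * ε) * ∫ x, exp (β * g x) * φ x ∂μ := by
  rw [← integral_const_mul]
  refine integral_mono hf (hg.const_mul _) fun x => ?_
  have hexp : β * f x ≤ β * ε + β * g x := by
    linarith [mul_le_mul_of_nonneg_left (hfg x) hβ, mul_add β (g x) ε]
  calc exp (β * f x) * φ x ≤ exp (β * ε + β * g x) * φ x := by gcongr; exact hφ x
    _ = exp (β * ε) * (exp (β * g x) * φ x) := by rw [exp_add, mul_assoc]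

end

theorem one_div_mul_log_sub_le {β ε a b : ℝ} (hβ : 0 < β) (ha : 0 < a)
    (hab : a ≤ exp (β * ε) * b) : 1 / β * log a - 1 / β * log b ≤ ε := by
  have hb : 0 < b := pos_of_mul_pos_right (ha.trans_le hab) (exp_pos _).le
  have hlog : log a ≤ β * ε + log b := by
    simpa [log_mul (exp_ne_zero _) hb.ne', log_exp] using log_le_log ha hab
  rw [← mul_sub, one_div_mul_eq_div, div_le_iff₀ hβ]
  linarith

section
variable {X : Type*} [TopologicalSpace X] [CompactSpace X] [MeasurableSpace X]
  [OpensMeasurableSpace X] {μ : Measure X} [IsFiniteMeasure μ] [NeZero μ]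

theorem eigenfunction_le_exp_mul {A : C(X × X, ℝ)} {φ : C(X, ℝ)} {β lam ε : ℝ} (hβ : 0 ≤ β)
    (hφ : ∀ x, 0 < φ x) (heig : ∀ y, ∫ x, exp (β * A (x, y)) * φ x ∂μ = lam * φ y) {y z : X}
    (h : ∀ x, A (x, y) ≤ A (x, z) + ε) : φ y ≤ exp (β * ε) * φ z := by
  have hint : ∀ w, Integrable (fun x => exp (β * A (x, w)) * φ x) μ := fun w =>
    (by fun_prop : Continuous fun x => exp (β * A (x, w)) * φ x).integrable_of_hasCompactSupport
      (HasCompactSupport.of_compactSpace _)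
  have hpos : 0 < lam * φ z := by
    rw [← heig z, integral_pos_iff_support_of_nonneg
      (fun x => (mul_pos (exp_pos _) (hφ x)).le) (hint z)]
    simp [Function.support, (hφ _).ne', NeZero.ne μ]
  have hlam : 0 < lam := pos_of_mul_pos_left hpos (hφ z).le
  have hcmp : lam * φ y ≤ exp (β * ε) * (lam * φ z) := by
    rw [← heig y, ← heig z]
    exact integral_exp_mul_le_exp_mul_integral_exp_mul hβ (fun x => (hφ x).le) (hint y) (hint z) h
  rw [mul_left_comm] at hcmp
  exact le_of_mul_le_mul_left hcmp hlam

theorem abs_one_div_mul_log_eigenfunction_sub_le {A : C(X × X, ℝ)} {φ : C(X, ℝ)} {β lam ε : ℝ}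
    (hβ : 0 < β) (hφ : ∀ x, 0 < φ x)
    (heig : ∀ y, ∫ x, exp (β * A (x, y)) * φ x ∂μ = lam * φ y) {y z : X}
    (h : ∀ x, |A (x, y) - A (x, z)| ≤ ε) :
    |1 / β * log (φ y) - 1 / β * log (φ z)| ≤ ε := by
  refine abs_sub_le_iff.mpr ⟨?_, ?_⟩ <;> refine one_div_mul_log_sub_le hβ (hφ _) ?_
  · exact eigenfunction_le_exp_mul hβ.le hφ heig fun x => by linarith [(abs_le.mp (h x)).2]
  · exact eigenfunction_le_exp_mul hβ.le hφ heig fun x => by linarith [(abs_le.mp (h x)).1]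

end

theorem equicontinuous_of_dist_le_dist {ι Y Z α : Type*} [TopologicalSpace Y] [PseudoMetricSpace Z]
    [PseudoMetricSpace α] {F : ι → Y → α} {G : Y → Z} (hG : Continuous G)
    (hF : ∀ i y z, dist (F i y) (F i z) ≤ dist (G y) (G z)) : Equicontinuous F := fun y₀ =>
  Metric.equicontinuousAt_of_continuity_modulus (fun y => dist (G y₀) (G y))
    (by simpa using (tendsto_const_nhds (x := G y₀)).dist (hG.tendsto y₀)) F
    (Filter.Eventually.of_forall fun y i => hF i y₀ y)

theorem stmt6_general (A : C(I × I, ℝ)) (φ : ℝ → C(I, ℝ)) (lam : ℝ → ℝ)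
    (hφpos : ∀ β : ℝ, 1 < β → ∀ x, 0 < φ β x)
    (heig : ∀ β : ℝ, 1 < β →
      ∀ y : I, ∫ x : I, Real.exp (β * A (x, y)) * φ β x = lam β * φ β y) :
    Equicontinuous (fun b : {β : ℝ // 1 < β} => fun x : I => (1 / b.1) * Real.log (φ b.1 x)) ∧
    ∀ β : ℝ, 1 < β → ∀ y z : I, ∀ ε > 0,
      (∀ x : I, |A (x, y) - A (x, z)| < ε) →
      |(1 / β) * Real.log (φ β y) - (1 / β) * Real.log (φ β z)| ≤ ε := by
  have hosc : ∀ β : ℝ, 1 < β → ∀ y z : I, ∀ ε, (∀ x : I, |A (x, y) - A (x, z)| ≤ ε) →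
      |(1 / β) * Real.log (φ β y) - (1 / β) * Real.log (φ β z)| ≤ ε := fun β hβ _ _ _ =>
    abs_one_div_mul_log_eigenfunction_sub_le (one_pos.trans hβ) (hφpos β hβ) (heig β hβ)
  refine ⟨?_, fun β hβ y z ε _ h => hosc β hβ y z ε fun x => (h x).le⟩
  -- The sup-distance between the sections `A(·, y)` is a common modulus of continuity.
  let column : C(I, C(I, ℝ)) := (A.comp ContinuousMap.prodSwap).curry
  refine equicontinuous_of_dist_le_dist column.continuous fun b y z => ?_
  rw [Real.dist_eq]
  exact hosc b.1 b.2 y z _ fun x => by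
    simpa [column, Real.dist_eq] using
      ContinuousMap.dist_apply_le_dist (f := column y) (g := column z) x

/-- The family { (1/β) log φ_β : β > 1 } of normalized logarithms of the
positive eigenfunctions of L_β is equicontinuous; moreover if |A(x,y) - A(x,z)| < ε
for all x then |(1/β) log φ_β(y) - (1/β) log φ_β(z)| ≤ ε. -/
theorem stmt6 (A : C(I × I, ℝ)) (φ : ℝ → C(I, ℝ)) (lam : ℝ → ℝ)
    (hφpos : ∀ β : ℝ, 1 < β → ∀ x, 0 < φ β x)
    (hnorm : ∀ β : ℝ, 1 < β → ∫ x : I, φ β x = 1)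
    (heig : ∀ β : ℝ, 1 < β →
      ∀ y : I, ∫ x : I, Real.exp (β * A (x, y)) * φ β x = lam β * φ β y) :
    Equicontinuous (fun b : {β : ℝ // 1 < β} => fun x : I => (1 / b.1) * Real.log (φ b.1 x)) ∧
    ∀ β : ℝ, 1 < β → ∀ y z : I, ∀ ε > 0,
      (∀ x : I, |A (x, y) - A (x, z)| < ε) →
      |(1 / β) * Real.log (φ β y) - (1 / β) * Real.log (φ β z)| ≤ ε :=
  stmt6_general A φ lam hφpos heig
end

section
/- (Laplace's method) Let f_k : [0,1] → ℝ be a sequence of continuous functions converging uniformly to f : [0,1] → ℝ. Then lim_{k→∞} (1/k) log ∫₀¹ e^{k f_k(x)} dx = sup_{x∈[0,1]} f(x). -/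
/-! If `F k` is uniformly `ε`-close to `f` on `[0,1]`, then `exp (k F k)` is at most
`exp (k (sup f + ε))` everywhere, and at least `exp (k (f x₀ - 2ε))` on a neighbourhood of
`x₀` in `[0,1]`, which has positive measure. Taking `log` and dividing by `k`, the measures of
these sets only contribute `O(1/k)`, so `(1/k) log ∫ exp (k F k)` is eventually squeezed
between `f x₀ - 3ε` and `sup f + 2ε`. -/

open MeasureTheory Filter Real Set Topology

lemma log_div_le_of_le_mul_exp {k a c I : ℝ} (hk : 0 < k) (hI : 0 < I)
    (h : I ≤ a * exp (k * c)) : log I / k ≤ log a / k + c := by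
  have ha : 0 < a := pos_of_mul_pos_left (hI.trans_le h) (exp_pos _).le
  have hlog : log I ≤ log a + k * c := by
    simpa only [log_mul ha.ne' (exp_pos _).ne', log_exp] using log_le_log hI h
  rw [div_add' _ _ _ hk.ne', mul_comm c]
  exact div_le_div_of_nonneg_right hlog hk.le

lemma le_log_div_of_mul_exp_le {k a c I : ℝ} (hk : 0 < k) (ha : 0 < a)
    (h : a * exp (k * c) ≤ I) : log a / k + c ≤ log I / k := by
  have hlog : log a + k * c ≤ log I := by
    simpa only [log_mul ha.ne' (exp_pos _).ne', log_exp] using log_le_log (by positivity) h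
  rw [div_add' _ _ _ hk.ne', mul_comm c]
  exact div_le_div_of_nonneg_right hlog hk.le

lemma measure_inter_pos_of_mem_closure_interior {X : Type*} [TopologicalSpace X]
    [MeasurableSpace X] (μ : Measure X) [μ.IsOpenPosMeasure] {s U : Set X} {x : X}
    (hx : x ∈ closure (interior s)) (hU : U ∈ 𝓝 x) : 0 < μ (U ∩ s) := by
  obtain ⟨y, hyU, hys⟩ := mem_closure_iff_nhds.1 hx (interior U) (interior_mem_nhds.2 hU)
  exact μ.measure_pos_of_nonempty_interior ⟨y, by rw [interior_inter]; exact ⟨hyU, hys⟩⟩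

lemma setIntegral_exp_pos {X : Type*} [MeasurableSpace X] {μ : Measure X} {s : Set X}
    {g : X → ℝ} (hs : μ s ≠ 0) (hg : IntegrableOn (fun x => exp (g x)) s μ) :
    0 < ∫ x in s, exp (g x) ∂μ :=
  haveI : NeZero (μ s) := ⟨hs⟩
  integral_exp_pos hg

section Laplace

variable {X : Type*} [MeasurableSpace X] {μ : Measure X} {s : Set X}
  {F : ℕ → X → ℝ} {f : X → ℝ}

lemma eventually_log_setIntegral_exp_div_lt (hs0 : μ s ≠ 0) (hs : μ s < ⊤)
    (hint : ∀ k : ℕ, IntegrableOn (fun x => exp (k * F k x)) s μ)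
    (hunif : TendstoUniformlyOn F f atTop s) {M c : ℝ} (hfM : ∀ x ∈ s, f x ≤ M)
    (hMc : M < c) :
    ∀ᶠ k : ℕ in atTop, log (∫ x in s, exp (k * F k x) ∂μ) / k < c := by
  set ε := (c - M) / 2 with hε_def
  have hε : 0 < ε := half_pos (sub_pos.2 hMc)
  have hvol : Tendsto (fun k : ℕ => log (μ.real s) / k) atTop (𝓝 0) :=
    tendsto_const_div_atTop_nhds_zero_nat _
  filter_upwards [Metric.tendstoUniformlyOn_iff.1 hunif ε hε,
    hvol.eventually (gt_mem_nhds hε), eventually_gt_atTop 0] with k hclose hvolk hk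
  have hk : (0 : ℝ) < k := Nat.cast_pos.2 hk
  have hbound : ∀ x ∈ s, ‖exp (k * F k x)‖ ≤ exp (k * (M + ε)) := fun x hx => by
    have := hclose x hx
    rw [Real.dist_eq, abs_lt] at this
    rw [norm_of_nonneg (exp_pos _).le, exp_le_exp]
    exact mul_le_mul_of_nonneg_left (by linarith [hfM x hx]) hk.le
  have hI := (le_abs_self _).trans (norm_setIntegral_le_of_norm_le_const hs hbound)
  have := log_div_le_of_le_mul_exp hk (setIntegral_exp_pos hs0 (hint k))
    (hI.trans_eq (mul_comm _ _))
  linarith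

lemma eventually_lt_log_setIntegral_exp_div [TopologicalSpace X] [OpensMeasurableSpace X]
    (hsm : MeasurableSet s) (hs : μ s < ⊤)
    (hint : ∀ k : ℕ, IntegrableOn (fun x => exp (k * F k x)) s μ)
    (hunif : TendstoUniformlyOn F f atTop s) {x₀ : X} (hf : ContinuousWithinAt f s x₀)
    (hpos : ∀ U ∈ 𝓝 x₀, 0 < μ (U ∩ s)) {c : ℝ} (hc : c < f x₀) :
    ∀ᶠ k : ℕ in atTop, c < log (∫ x in s, exp (k * F k x) ∂μ) / k := by
  set ε := (f x₀ - c) / 3 with hε_def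
  have hε : 0 < ε := div_pos (sub_pos.2 hc) three_pos
  obtain ⟨U, hUo, hx₀U, hU⟩ :=
    mem_nhdsWithin.1 (hf.eventually (Ioi_mem_nhds (sub_lt_self (f x₀) hε)))
  have hUpos := hpos U (hUo.mem_nhds hx₀U)
  have hUfin : μ (U ∩ s) < ⊤ := (measure_mono inter_subset_right).trans_lt hs
  have hvol : Tendsto (fun k : ℕ => log (μ.real (U ∩ s)) / k) atTop (𝓝 0) :=
    tendsto_const_div_atTop_nhds_zero_nat _
  filter_upwards [Metric.tendstoUniformlyOn_iff.1 hunif ε hε,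
    hvol.eventually (lt_mem_nhds (neg_lt_zero.2 hε)), eventually_gt_atTop 0]
    with k hclose hvolk hk
  have hk : (0 : ℝ) < k := Nat.cast_pos.2 hk
  have hbound : ∀ x ∈ U ∩ s, exp (k * (f x₀ - 2 * ε)) ≤ exp (k * F k x) := fun x hx => by
    have := hclose x hx.2
    rw [Real.dist_eq, abs_lt] at this
    have : f x₀ - ε < f x := hU hx
    exact exp_le_exp.2 (mul_le_mul_of_nonneg_left (by linarith) hk.le)
  have hUI := (setIntegral_ge_of_const_le (hUo.measurableSet.inter hsm) hUfin.ne hbound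
    ((hint k).mono_set inter_subset_right)).trans
    (setIntegral_mono_set (hint k) (Eventually.of_forall fun x => (exp_pos _).le)
      (Eventually.of_forall inter_subset_right))
  have := le_log_div_of_mul_exp_le (a := μ.real (U ∩ s)) hk
    (ENNReal.toReal_pos hUpos.ne' hUfin.ne) hUI
  linarith

end Laplace

/-- Laplace's method: if continuous f_k → f uniformly on [0,1], then
(1/k) log ∫₀¹ e^{k f_k(x)} dx → sup_{[0,1]} f. -/
theorem stmt7 (f : ℝ → ℝ) (F : ℕ → ℝ → ℝ)
    (hc : ∀ k, ContinuousOn (F k) (Set.Icc 0 1))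
    (hunif : TendstoUniformlyOn F f atTop (Set.Icc 0 1)) :
    Tendsto (fun k : ℕ =>
        (1 / (k : ℝ)) * Real.log (∫ x in Set.Icc (0:ℝ) 1, Real.exp (k * F k x)))
      atTop (nhds (sSup (f '' Set.Icc 0 1))) := by
  have hfc : ContinuousOn f (Icc 0 1) := hunif.continuousOn (Eventually.of_forall hc).frequently
  have hint (k : ℕ) : IntegrableOn (fun x => exp (k * F k x)) (Icc 0 1) :=
    (continuous_exp.comp_continuousOn ((hc k).const_smul (k : ℝ))).integrableOn_Icc
  have hs : volume (Icc (0 : ℝ) 1) < ⊤ := measure_Icc_lt_top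
  simp only [one_div_mul_eq_div]
  refine tendsto_order.2 ⟨fun c hcM => ?_, fun c hMc => ?_⟩
  · obtain ⟨_, ⟨x₀, hx₀, rfl⟩, hcx⟩ :=
      exists_lt_of_lt_csSup ((nonempty_Icc.2 zero_le_one).image f) hcM
    refine eventually_lt_log_setIntegral_exp_div measurableSet_Icc hs hint hunif (hfc x₀ hx₀)
      (fun U hU => measure_inter_pos_of_mem_closure_interior volume ?_ hU) hcx
    rwa [interior_Icc, closure_Ioo zero_ne_one]
  · exact eventually_log_setIntegral_exp_div_lt (by simp) hs hint hunif
      (fun x hx => le_csSup (isCompact_Icc.bddAbove_image hfc) (mem_image_of_mem f hx)) hMc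
end

section
/- Let A : [0,1]² → ℝ be continuous and M = { probability measures ν on [0,1]² : ∫(f(x)−f(y))dν = 0 for all continuous f : [0,1] → ℝ }. Then sup_{ν ∈ M} ∫ A dν = inf_{f ∈ C([0,1])} max_{(x,y) ∈ [0,1]²} ( A(x,y) + f(x) − f(y) ). -/
/-!
Weak duality is immediate: integrating `A p + f p.1 - f p.2` against a measure with equal
marginals gives `∫ A`. For the converse let `c` be the supremum of `∫ A dν`. Uniform
measures on the edges of a cycle `x₀ → x₁ → ⋯ → xₙ → x₀` have equal marginals, so every cycle
of `A - c` has nonpositive weight. Then the largest weight of a walk of `A - c` ending at `y` is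
finite, and as a function of `y` it is a continuous sub-action `f`, with
`f x + (A (x, y) - c) ≤ f y`; this shows that the infimum is at most `c`.
-/

open MeasureTheory unitInterval

section WalkPotential

variable {X : Type*}

def cycleSum (A : X × X → ℝ) {n : ℕ} (x : Fin (n + 1) → X) : ℝ :=
  ∑ i, A (x i, x (i + 1))

def walkSum (A : X × X → ℝ) {m : ℕ} (q : Fin (m + 1) → X) : ℝ :=
  ∑ i : Fin m, A (q i.castSucc, q i.succ)

lemma cycleSum_coboundary_eq_zero (f : X → ℝ) {n : ℕ} (x : Fin (n + 1) → X) :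
    cycleSum (fun p => f p.1 - f p.2) x = 0 := by
  rw [cycleSum, Finset.sum_sub_distrib, sub_eq_zero]
  exact (Equiv.sum_comp (Equiv.addRight 1) fun i => f (x i)).symm

lemma cycleSum_sub_const (A : X × X → ℝ) (c : ℝ) {n : ℕ} (x : Fin (n + 1) → X) :
    cycleSum (fun p => A p - c) x = cycleSum A x - (n + 1) * c := by
  simp [cycleSum, Finset.sum_sub_distrib]

lemma walkSum_snoc (A : X × X → ℝ) {m : ℕ} (q : Fin (m + 1) → X) (y : X) :
    walkSum A (Fin.snoc q y) = walkSum A q + A (q (Fin.last m), y) := by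
  simp only [walkSum, Fin.sum_univ_castSucc, Fin.succ_castSucc, Fin.snoc_castSucc, Fin.succ_last,
    Fin.snoc_last]

lemma cycleSum_eq_walkSum_add (A : X × X → ℝ) {m : ℕ} (x : Fin (m + 2) → X) :
    cycleSum A x = walkSum A x + A (x (Fin.last (m + 1)), x 0) := by
  simp only [cycleSum, walkSum, Fin.sum_univ_castSucc (n := m + 1), Fin.coeSucc_eq_succ,
    Fin.last_add_one]

variable {A : X × X → ℝ}

lemma walkSum_snoc_le_of_cycleSum_nonpos (hA : ∀ (n : ℕ) (x : Fin (n + 1) → X), cycleSum A x ≤ 0)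
    {m : ℕ} (q : Fin (m + 1) → X) (y : X) : walkSum A (Fin.snoc q y) ≤ -A (y, q 0) := by
  have h := hA _ (Fin.snoc q y)
  rw [cycleSum_eq_walkSum_add, Fin.snoc_last, ← Fin.castSucc_zero, Fin.snoc_castSucc] at h
  linarith

noncomputable def walkPotential (A : X × X → ℝ) (y : X) : ℝ :=
  ⨆ q : Σ m, Fin (m + 1) → X, walkSum A (Fin.snoc q.2 y)

lemma bddAbove_walkSum_snoc (hA : ∀ (n : ℕ) (x : Fin (n + 1) → X), cycleSum A x ≤ 0)
    (hb : BddBelow (Set.range A)) (y : X) :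
    BddAbove (Set.range fun q : Σ m, Fin (m + 1) → X => walkSum A (Fin.snoc q.2 y)) := by
  obtain ⟨b, hb⟩ := hb
  refine ⟨-b, ?_⟩
  rintro _ ⟨⟨m, q⟩, rfl⟩
  linarith [walkSum_snoc_le_of_cycleSum_nonpos hA q y, hb ⟨(y, q 0), rfl⟩]

lemma walkSum_snoc_le_walkPotential (hA : ∀ (n : ℕ) (x : Fin (n + 1) → X), cycleSum A x ≤ 0)
    (hb : BddBelow (Set.range A)) {m : ℕ} (q : Fin (m + 1) → X) (y : X) :
    walkSum A (Fin.snoc q y) ≤ walkPotential A y :=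
  le_ciSup (bddAbove_walkSum_snoc hA hb y) ⟨m, q⟩

lemma walkPotential_add_le (hA : ∀ (n : ℕ) (x : Fin (n + 1) → X), cycleSum A x ≤ 0)
    (hb : BddBelow (Set.range A)) (y y' : X) :
    walkPotential A y + A (y, y') ≤ walkPotential A y' := by
  have : Nonempty (Σ m, Fin (m + 1) → X) := ⟨⟨0, fun _ => y⟩⟩
  rw [← le_sub_iff_add_le]
  refine ciSup_le fun ⟨m, q⟩ => le_sub_iff_add_le.2 ?_
  have h := walkSum_snoc_le_walkPotential hA hb (Fin.snoc q y) y'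
  rwa [walkSum_snoc, Fin.snoc_last] at h

lemma walkPotential_le_add (hA : ∀ (n : ℕ) (x : Fin (n + 1) → X), cycleSum A x ≤ 0)
    (hb : BddBelow (Set.range A)) {u v : X} {ε : ℝ} (h : ∀ x, A (x, u) ≤ A (x, v) + ε) :
    walkPotential A u ≤ walkPotential A v + ε := by
  have : Nonempty (Σ m, Fin (m + 1) → X) := ⟨⟨0, fun _ => u⟩⟩
  refine ciSup_le fun ⟨m, q⟩ => ?_
  calc walkSum A (Fin.snoc q u) = walkSum A q + A (q (Fin.last m), u) := walkSum_snoc A q u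
    _ ≤ walkSum A q + A (q (Fin.last m), v) + ε := by linarith [h (q (Fin.last m))]
    _ = walkSum A (Fin.snoc q v) + ε := by rw [walkSum_snoc]
    _ ≤ walkPotential A v + ε := by gcongr; exact walkSum_snoc_le_walkPotential hA hb q v

lemma uniformContinuous_walkPotential [PseudoMetricSpace X]
    (hA : ∀ (n : ℕ) (x : Fin (n + 1) → X), cycleSum A x ≤ 0) (hb : BddBelow (Set.range A))
    (hAc : UniformContinuous A) : UniformContinuous (walkPotential A) := by
  rw [Metric.uniformContinuous_iff] at hAc ⊢
  intro ε hε
  obtain ⟨δ, hδ, hAδ⟩ := hAc _ (half_pos hε)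
  have hclose : ∀ {a b : X}, dist a b < δ → ∀ x, A (x, a) ≤ A (x, b) + ε / 2 := fun hab x => by
    have h := hAδ (a := (x, _)) (b := (x, _)) (by simpa [Prod.dist_eq] using hab)
    linarith [(abs_lt.1 (Real.dist_eq _ _ ▸ h)).2]
  refine ⟨δ, hδ, fun {u v} huv => ?_⟩
  have h₁ := walkPotential_le_add hA hb (hclose huv)
  have h₂ := walkPotential_le_add hA hb (hclose (dist_comm u v ▸ huv))
  rw [Real.dist_eq, abs_lt]
  constructor <;> linarith

lemma exists_continuous_add_sub_le [PseudoMetricSpace X] [CompactSpace X]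
    (A : C(X × X, ℝ)) (c : ℝ) (hA : ∀ (n : ℕ) (x : Fin (n + 1) → X), cycleSum A x ≤ (n + 1) * c) :
    ∃ f : C(X, ℝ), ∀ p : X × X, A p + f p.1 - f p.2 ≤ c := by
  set B : X × X → ℝ := fun p => A p - c
  have hB : ∀ (n : ℕ) (x : Fin (n + 1) → X), cycleSum B x ≤ 0 := fun n x => by
    rw [cycleSum_sub_const]; linarith [hA n x]
  have hBb : BddBelow (Set.range B) := (isCompact_range (by fun_prop)).bddBelow
  have hBu : UniformContinuous B :=
    (CompactSpace.uniformContinuous_of_continuous A.continuous).sub uniformContinuous_const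
  refine ⟨⟨walkPotential B, (uniformContinuous_walkPotential hB hBb hBu).continuous⟩, fun p => ?_⟩
  have h := walkPotential_add_le hB hBb p.1 p.2
  simp only [ContinuousMap.coe_mk, B] at h ⊢
  linarith

end WalkPotential

section Duality

variable {X : Type*} [PseudoMetricSpace X] [CompactSpace X] [MeasurableSpace X] [BorelSpace X]

lemma integral_le_iSup_add_sub (A : C(X × X, ℝ)) (g : C(X, ℝ)) (ν : Measure (X × X))
    [IsProbabilityMeasure ν] (hν : ∀ f : C(X, ℝ), ∫ p, (f p.1 - f p.2) ∂ν = 0) :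
    ∫ p, A p ∂ν ≤ ⨆ p : X × X, (A p + g p.1 - g p.2) := by
  have hint : ∀ h : X × X → ℝ, Continuous h → Integrable h ν := fun h hh =>
    hh.integrable_of_hasCompactSupport (.of_compactSpace _)
  have hbdd : BddAbove (Set.range fun p : X × X => A p + g p.1 - g p.2) :=
    (isCompact_range (by fun_prop)).bddAbove
  calc ∫ p, A p ∂ν = ∫ p, A p ∂ν + ∫ p, (g p.1 - g p.2) ∂ν := by rw [hν g, add_zero]
    _ = ∫ p, (A p + g p.1 - g p.2) ∂ν := by
      simp_rw [add_sub_assoc]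
      exact (integral_add (hint _ A.continuous) (hint _ (by fun_prop))).symm
    _ ≤ ∫ _, (⨆ p : X × X, (A p + g p.1 - g p.2)) ∂ν :=
      integral_mono (hint _ (by fun_prop)) (integrable_const _) (le_ciSup hbdd)
    _ = ⨆ p : X × X, (A p + g p.1 - g p.2) := by simp

noncomputable def cycleMeasure {n : ℕ} (x : Fin (n + 1) → X) : ProbabilityMeasure (X × X) :=
  ⟨(PMF.uniformOfFintype (Fin (n + 1))).toMeasure.map fun i => (x i, x (i + 1)),
    Measure.isProbabilityMeasure_map Measurable.of_discrete.aemeasurable⟩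

lemma integral_cycleMeasure {n : ℕ} (x : Fin (n + 1) → X) {g : X × X → ℝ} (hg : Continuous g) :
    ∫ p, g p ∂(cycleMeasure x : Measure (X × X)) = cycleSum g x / (n + 1) := by
  rw [cycleMeasure, ProbabilityMeasure.coe_mk, integral_map Measurable.of_discrete.aemeasurable
    hg.aestronglyMeasurable, PMF.integral_eq_sum]
  simp only [PMF.uniformOfFintype_apply, Fintype.card_fin, ENNReal.toReal_inv,
    ENNReal.toReal_natCast, smul_eq_mul, ← Finset.mul_sum, cycleSum]
  push_cast
  ring

lemma cycleSum_le_of_integral_le {A : C(X × X, ℝ)} {c : ℝ}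
    (hc : ∀ ν : ProbabilityMeasure (X × X),
      (∀ f : C(X, ℝ), ∫ p, (f p.1 - f p.2) ∂(ν : Measure (X × X)) = 0) →
      ∫ p, A p ∂(ν : Measure (X × X)) ≤ c)
    (n : ℕ) (x : Fin (n + 1) → X) : cycleSum A x ≤ (n + 1) * c := by
  have h := hc (cycleMeasure x) fun f => by
    simp only [integral_cycleMeasure x (by fun_prop : Continuous fun p : X × X => f p.1 - f p.2),
      cycleSum_coboundary_eq_zero, zero_div]
  rwa [integral_cycleMeasure x A.continuous, div_le_iff₀ (by positivity), mul_comm] at h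

theorem sSup_integral_eq_sInf_iSup [Nonempty X] (A : C(X × X, ℝ)) :
    sSup {r : ℝ | ∃ ν : ProbabilityMeasure (X × X),
        (∀ f : C(X, ℝ), ∫ p, (f p.1 - f p.2) ∂(ν : Measure (X × X)) = 0) ∧
        r = ∫ p, A p ∂(ν : Measure (X × X))} =
    sInf {r : ℝ | ∃ f : C(X, ℝ), r = ⨆ p : X × X, (A p + f p.1 - f p.2)} := by
  set L := {r : ℝ | ∃ ν : ProbabilityMeasure (X × X),
        (∀ f : C(X, ℝ), ∫ p, (f p.1 - f p.2) ∂(ν : Measure (X × X)) = 0) ∧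
        r = ∫ p, A p ∂(ν : Measure (X × X))}
  set R := {r : ℝ | ∃ f : C(X, ℝ), r = ⨆ p : X × X, (A p + f p.1 - f p.2)}
  have hLR : ∀ r ∈ L, ∀ t ∈ R, r ≤ t := by
    rintro _ ⟨ν, hν, rfl⟩ _ ⟨g, rfl⟩
    exact integral_le_iSup_add_sub A g ν hν
  obtain ⟨r₀, hr₀⟩ : L.Nonempty := by
    let x₀ := Classical.arbitrary X
    exact ⟨_, ⟨Measure.dirac (x₀, x₀), inferInstance⟩, fun f => by
      simp [integral_dirac' _ _
        (by fun_prop : Continuous fun p : X × X => f p.1 - f p.2).stronglyMeasurable], rfl⟩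
  obtain ⟨t₀, ht₀⟩ : R.Nonempty := ⟨_, 0, rfl⟩
  obtain ⟨f, hf⟩ := exists_continuous_add_sub_le A (sSup L) <| cycleSum_le_of_integral_le
    fun ν hν => le_csSup ⟨t₀, fun r hr => hLR r hr t₀ ht₀⟩ ⟨ν, hν, rfl⟩
  refine le_antisymm (csSup_le ⟨r₀, hr₀⟩ fun r hr => le_csInf ⟨t₀, ht₀⟩ (hLR r hr)) ?_
  exact (csInf_le ⟨r₀, hLR r₀ hr₀⟩ ⟨f, rfl⟩).trans (ciSup_le hf)

end Duality

/-- Fenchel–Rockafellar duality: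
sup_{ν ∈ M} ∫ A dν = inf_{f ∈ C([0,1])} max_{(x,y)} (A(x,y) + f(x) - f(y)),
where M is the set of probability measures on [0,1]² with equal marginals. -/
theorem stmt8 (A : C(I × I, ℝ)) :
    sSup {r : ℝ | ∃ ν : ProbabilityMeasure (I × I),
        (∀ f : C(I, ℝ), ∫ p, (f p.1 - f p.2) ∂(ν : Measure (I × I)) = 0) ∧
        r = ∫ p, A p ∂(ν : Measure (I × I))} =
    sInf {r : ℝ | ∃ f : C(I, ℝ), r = ⨆ p : I × I, (A p + f p.1 - f p.2)} :=
  sSup_integral_eq_sInf_iSup A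
end

section
/- Let A : [0,1]² → ℝ be continuous, m = max_{ν∈M} ∫A dν, and let u : [0,1] → ℝ be a continuous function satisfying u(x) ≥ A(x,y) + u(y) − m for all x,y (a backward subaction). If ν ∈ M is a maximizing measure (∫A dν = m), then u(x) = A(x,y) + u(y) − m for all (x,y) in the support of ν. -/
open MeasureTheory unitInterval

/-- topological support of a measure -/
def measSupp {X : Type*} [TopologicalSpace X] [MeasurableSpace X]
    (ν : Measure X) : Set X := {p | ∀ U : Set X, IsOpen U → p ∈ U → 0 < ν U}

/-- if u is a backward subaction and ν ∈ M is a maximizing measure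
(∫ A dν = m = max over M), then u(x) = A(x,y) + u(y) - m on supp ν. -/
theorem stmt9 (A : C(I × I, ℝ)) (m : ℝ) (u : C(I, ℝ))
    (hsub : ∀ x y : I, u x ≥ A (x, y) + u y - m)
    (ν : ProbabilityMeasure (I × I))
    (hν : ∀ f : C(I, ℝ), ∫ p, (f p.1 - f p.2) ∂(ν : Measure (I × I)) = 0)
    (hmax : ∀ ν' : ProbabilityMeasure (I × I),
      (∀ f : C(I, ℝ), ∫ p, (f p.1 - f p.2) ∂(ν' : Measure (I × I)) = 0) →
      ∫ p, A p ∂(ν' : Measure (I × I)) ≤ m)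
    (hm : ∫ p, A p ∂(ν : Measure (I × I)) = m) :
    ∀ p ∈ measSupp (ν : Measure (I × I)), u p.1 = A p + u p.2 - m := by
  set g : I × I → ℝ := fun p => u p.1 - A p - u p.2 + m with hg
  have hgc : Continuous g := by
    fun_prop
  have hgnn : 0 ≤ g := by
    intro p
    have h := hsub p.1 p.2
    simp only [Prod.mk.eta] at h
    simp only [hg, Pi.zero_apply]
    linarith
  have hAi : Integrable (fun p : I × I => A p) (ν : Measure (I × I)) :=
    A.continuous.integrable_of_hasCompactSupport
      (HasCompactSupport.of_compactSpace _)
  have hui : Integrable (fun p : I × I => u p.1 - u p.2) (ν : Measure (I × I)) := by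
    have : Continuous (fun p : I × I => u p.1 - u p.2) := by fun_prop
    exact this.integrable_of_hasCompactSupport (HasCompactSupport.of_compactSpace _)
  have hgi : Integrable g (ν : Measure (I × I)) :=
    hgc.integrable_of_hasCompactSupport (HasCompactSupport.of_compactSpace _)
  have hint : ∫ p, g p ∂(ν : Measure (I × I)) = 0 := by
    have h2 : Integrable (fun p : I × I => m - A p) (ν : Measure (I × I)) :=
      (integrable_const m).sub hAi
    simp only [hg]
    rw [show (fun p : I × I => u p.1 - A p - u p.2 + m)
        = fun p : I × I => (u p.1 - u p.2) + (m - A p) from by funext p; ring,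
      integral_add hui h2, hν u, integral_sub (integrable_const m) hAi, hm]
    simp
  have hae : g =ᵐ[(ν : Measure (I × I))] 0 :=
    (integral_eq_zero_iff_of_nonneg hgnn hgi).mp hint
  intro p hp
  by_contra hne
  have hgp : 0 < g p := lt_of_le_of_ne (hgnn p) (by
    intro h
    apply hne
    simp only [hg] at h
    linarith)
  set U : Set (I × I) := g ⁻¹' Set.Ioi (g p / 2) with hU
  have hUopen : IsOpen U := isOpen_Ioi.preimage hgc
  have hpU : p ∈ U := by simp [hU]; linarith
  have hpos := hp U hUopen hpU
  have hsub0 : U ⊆ {x | g x ≠ 0} := by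
    intro x hx
    simp only [hU, Set.mem_preimage, Set.mem_Ioi] at hx
    intro h
    rw [h] at hx
    exact absurd hx (not_lt.mpr (half_pos hgp).le)
  have : (ν : Measure (I × I)) U = 0 :=
    measure_mono_null hsub0 (by simpa [Filter.EventuallyEq, ae_iff] using hae)
  exact absurd this hpos.ne'
end

section
/- Let A : [0,1]² → ℝ be C¹, and u a calibrated backward-subaction for A with value m. If (x, y(x)) satisfies u(x) = A(x,y(x)) + u(y(x)) − m and y(x) ∈ (0,1), then −∂A/∂y (x, y(x)) belongs to the superdifferential D⁺u(y(x)). -/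
/-!
By calibration, `t ↦ u y + A x y - A x t` lies above `u` on `[0,1]` (subaction inequality at `x`)
and touches it at `y`; a differentiable function touching from above has its derivative in the
superdifferential.
-/

open Filter

def Dplus (u : ℝ → ℝ) (x : ℝ) : Set ℝ :=
  {p | limsup (fun v => (u (x + v) - u x - p * v) / |v|) (nhdsWithin 0 {(0:ℝ)}ᶜ) ≤ 0}

open Topology

-- If `g` is not cobounded, `limsup g l` is the junk value `0`.
lemma limsup_nonpos_of_eventuallyLE_of_tendsto {α : Type*} {l : Filter α} [l.NeBot]
    {g h : α → ℝ} (hgh : g ≤ᶠ[l] h) (hh : Tendsto h l (𝓝 0)) : limsup g l ≤ 0 := by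
  by_cases hg : l.IsCoboundedUnder (· ≤ ·) g
  · calc limsup g l ≤ limsup h l := limsup_le_limsup hgh hg hh.isBoundedUnder_le
      _ = 0 := hh.limsup_eq
  · rw [Real.limsup_of_not_isCoboundedUnder hg]

lemma mem_Dplus_of_hasDerivAt_of_eventually_sub_le {u φ : ℝ → ℝ} {p y : ℝ}
    (hφ : HasDerivAt φ p y) (hle : ∀ᶠ t in 𝓝 y, u t - u y ≤ φ t - φ y) : p ∈ Dplus u y := by
  have hslope : Tendsto (fun v => (φ (y + v) - φ y - p * v) / |v|) (𝓝[≠] 0) (𝓝 0) := by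
    have ho := (hasDerivAt_iff_isLittleO_nhds_zero.mp hφ).norm_right
    simpa only [smul_eq_mul, mul_comm _ p, Real.norm_eq_abs] using
      ho.tendsto_div_nhds_zero.mono_left nhdsWithin_le_nhds
  have hshift : Tendsto (fun v : ℝ => y + v) (𝓝[≠] 0) (𝓝 y) := by
    simpa using (tendsto_const_nhds.add tendsto_id).mono_left (nhdsWithin_le_nhds (a := (0:ℝ)))
  refine limsup_nonpos_of_eventuallyLE_of_tendsto ?_ hslope
  filter_upwards [hshift.eventually hle] with v hv
  exact div_le_div_of_nonneg_right (by linarith) (abs_nonneg v)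

theorem stmt12_general (A : ℝ → ℝ → ℝ) (hA : ContDiff ℝ 1 (Function.uncurry A))
    (m : ℝ) (u : ℝ → ℝ)
    (hsub : ∀ z ∈ Set.Icc (0:ℝ) 1, ∀ w ∈ Set.Icc (0:ℝ) 1, u z ≥ A z w + u w - m)
    (x : ℝ) (hx : x ∈ Set.Icc (0:ℝ) 1) (y : ℝ) (hy : y ∈ Set.Ioo (0:ℝ) 1)
    (hcal : u x = A x y + u y - m) :
    -deriv (fun t => A x t) y ∈ Dplus u y := by
  have hAx : Differentiable ℝ (fun t => A x t) :=
    (hA.differentiable one_ne_zero).comp ((differentiable_const x).prodMk differentiable_id)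
  refine mem_Dplus_of_hasDerivAt_of_eventually_sub_le (φ := fun t => -A x t)
    (hAx y).hasDerivAt.neg ?_
  filter_upwards [Ioo_mem_nhds hy.1 hy.2] with t ht
  linarith [hsub x hx t (Set.Ioo_subset_Icc_self ht)]

/-- if u is a calibrated backward-subaction for the C¹ potential A and
(x, y(x)) satisfies u(x) = A(x,y(x)) + u(y(x)) - m with y(x) ∈ (0,1), then
-∂A/∂y(x,y(x)) ∈ D⁺u(y(x)). -/
theorem stmt12 (A : ℝ → ℝ → ℝ) (hA : ContDiff ℝ 1 (Function.uncurry A))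
    (m : ℝ) (u : ℝ → ℝ) (hu : ContinuousOn u (Set.Icc 0 1))
    (hsub : ∀ z ∈ Set.Icc (0:ℝ) 1, ∀ w ∈ Set.Icc (0:ℝ) 1, u z ≥ A z w + u w - m)
    (x : ℝ) (hx : x ∈ Set.Icc (0:ℝ) 1) (y : ℝ) (hy : y ∈ Set.Ioo (0:ℝ) 1)
    (hcal : u x = A x y + u y - m) :
    -deriv (fun t => A x t) y ∈ Dplus u y :=
  stmt12_general A hA m u hsub x hx y hy hcal
end

section
/- Let ν be a Borel probability measure on [0,1]² satisfying ∫(f(x)−f(y))dν = 0 for all continuous f : [0,1] → ℝ. Then for ν-almost every point (x,y) ∈ supp(ν), there exists z ∈ [0,1] such that (z,x) ∈ supp(ν). -/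
/-!
Testing the hypothesis against bounded continuous functions shows that the two marginals of `ν`
coincide, since such functions determine a finite measure on a metrizable space. With
`T = Prod.snd '' supp ν` (compact, hence closed), the set of `p` with `p.1 ∉ T` then has measure
`(ν.map fst) Tᶜ = (ν.map snd) Tᶜ ≤ ν (supp ν)ᶜ = 0`.
-/

open MeasureTheory unitInterval

lemma measSupp_eq_support {X : Type*} [TopologicalSpace X] [MeasurableSpace X]
    (ν : Measure X) : measSupp ν = ν.support := by
  rw [Measure.support_eq_forall_isOpen]
  ext p
  exact forall_congr' fun U => forall_comm

namespace MeasureTheory.Measure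

variable {X : Type*} [TopologicalSpace X] [MeasurableSpace X] [BorelSpace X]

lemma map_fst_eq_map_snd_of_integral_sub_eq_zero [TopologicalSpace.PseudoMetrizableSpace X]
    {ν : Measure (X × X)} [IsFiniteMeasure ν]
    (hν : ∀ f : C(X, ℝ), ∫ p, (f p.1 - f p.2) ∂ν = 0) :
    ν.map Prod.fst = ν.map Prod.snd := by
  refine ext_of_forall_integral_eq_of_IsFiniteMeasure fun f => ?_
  rw [integral_map measurable_fst.aemeasurable f.continuous.aestronglyMeasurable,
    integral_map measurable_snd.aemeasurable f.continuous.aestronglyMeasurable,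
    ← sub_eq_zero, ← integral_sub]
  · exact hν f.toContinuousMap
  · exact (f.integrable _).comp_measurable measurable_fst
  · exact (f.integrable _).comp_measurable measurable_snd

lemma ae_fst_mem_image_snd_support [CompactSpace X] [T2Space X] [SecondCountableTopology X]
    {ν : Measure (X × X)} (hmarg : ν.map Prod.fst = ν.map Prod.snd) :
    ∀ᵐ p ∂ν, p.1 ∈ Prod.snd '' ν.support := by
  have hclosed : IsClosed (Prod.snd '' ν.support) :=
    (isClosed_support.isCompact.image continuous_snd).isClosed
  rw [ae_iff]
  change ν (Prod.fst ⁻¹' (Prod.snd '' ν.support)ᶜ) = 0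
  rw [← map_apply measurable_fst hclosed.measurableSet.compl, hmarg,
    map_apply measurable_snd hclosed.measurableSet.compl]
  exact measure_mono_null (μ := ν) (fun q (hq : q.2 ∉ _) hsupp => hq ⟨q, hsupp, rfl⟩)
    measure_compl_support

end MeasureTheory.Measure

/-- if ν is a probability measure on [0,1]² with equal marginals, then
for ν-a.e. (x,y) ∈ supp ν there is z with (z,x) ∈ supp ν. -/
theorem stmt13 (ν : Measure (I × I)) [IsProbabilityMeasure ν]
    (hν : ∀ f : C(I, ℝ), ∫ p, (f p.1 - f p.2) ∂ν = 0) :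
    ∀ᵐ p ∂ν, p ∈ measSupp ν → ∃ z : I, (z, p.1) ∈ measSupp ν := by
  have hmarg := Measure.map_fst_eq_map_snd_of_integral_sub_eq_zero hν
  filter_upwards [Measure.ae_fst_mem_image_snd_support hmarg] with p ⟨q, hq, hq2⟩ _
  refine ⟨q.1, ?_⟩
  rwa [measSupp_eq_support, ← hq2]
end

section
/- Let A : [0,1]² → ℝ be C² with ∂²A/∂x∂y > 0, m ∈ ℝ, and V̄ a calibrated backward-subaction: V̄(x) = max_y [A(x,y) + V̄(y) − m]. On the set of x where the maximizer y(x) is unique, the map x ↦ y(x) is monotone nondecreasing. -/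
/-!
If `x < x'` but `Y x' < Y x`, adding the two calibration equalities to the subaction
inequalities `V x ≥ A x (Y x') + V (Y x') - m` and `V x' ≥ A x' (Y x) + V (Y x) - m` gives
`A x (Y x) + A x' (Y x') ≥ A x (Y x') + A x' (Y x)`. This contradicts the strict
supermodularity of `A`, which follows from `∂²A/∂x∂y > 0` by applying the mean value theorem
twice: first in `y` to `∂A/∂x`, then in `x` to `A x z - A x z'`.
-/

open Function Set

theorem strictMonoOn_of_forall_deriv_pos {f : ℝ → ℝ} {s : Set ℝ} (hs : Convex ℝ s)
    (hf : ∀ x ∈ s, 0 < deriv f x) : StrictMonoOn f s :=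
  strictMonoOn_of_deriv_pos hs
    (fun x hx => (differentiableAt_of_deriv_ne_zero (hf x hx).ne').continuousAt.continuousWithinAt)
    (fun x hx => hf x (interior_subset hx))

section MixedDeriv

variable {A : ℝ → ℝ → ℝ} {s t : Set ℝ}

theorem strictMonoOn_sub_of_mixed_deriv_pos (hA : ∀ y, Differentiable ℝ (A · y))
    (hs : Convex ℝ s) (ht : Convex ℝ t)
    (htwist : ∀ x ∈ s, ∀ y ∈ t, 0 < deriv (fun y' => deriv (fun x' => A x' y') x) y)
    {z z' : ℝ} (hz : z ∈ t) (hz' : z' ∈ t) (hzz : z' < z) :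
    StrictMonoOn (fun x => A x z - A x z') s := by
  refine strictMonoOn_of_forall_deriv_pos hs fun x hx => ?_
  have hderiv_mono : StrictMonoOn (fun y => deriv (fun x' => A x' y) x) t :=
    strictMonoOn_of_forall_deriv_pos ht (htwist x hx)
  rw [deriv_fun_sub ((hA z).differentiableAt) ((hA z').differentiableAt), sub_pos]
  exact hderiv_mono hz' hz hzz

theorem add_lt_add_of_mixed_deriv_pos (hA : ∀ y, Differentiable ℝ (A · y))
    (hs : Convex ℝ s) (ht : Convex ℝ t)
    (htwist : ∀ x ∈ s, ∀ y ∈ t, 0 < deriv (fun y' => deriv (fun x' => A x' y') x) y)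
    {x x' z z' : ℝ} (hx : x ∈ s) (hx' : x' ∈ s) (hz : z ∈ t) (hz' : z' ∈ t)
    (hxx : x < x') (hzz : z' < z) :
    A x z + A x' z' < A x z' + A x' z := by
  have := strictMonoOn_sub_of_mixed_deriv_pos hA hs ht htwist hz hz' hzz hx hx' hxx
  dsimp only at this
  linarith

end MixedDeriv

theorem differentiable_apply_of_contDiff_uncurry {A : ℝ → ℝ → ℝ} {n : WithTop ℕ∞}
    (hA : ContDiff ℝ n (uncurry A)) (hn : n ≠ 0) (y : ℝ) : Differentiable ℝ (A · y) :=
  (hA.differentiable hn).comp (differentiable_id.prodMk (differentiable_const y))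

theorem stmt16_general (A : ℝ → ℝ → ℝ) (hA : ContDiff ℝ 2 (Function.uncurry A))
    (htwist : ∀ x ∈ Set.Icc (0:ℝ) 1, ∀ y ∈ Set.Icc (0:ℝ) 1,
      0 < deriv (fun y' => deriv (fun x' => A x' y') x) y)
    (m : ℝ) (V : ℝ → ℝ)
    (hsub : ∀ x ∈ Set.Icc (0:ℝ) 1, ∀ y ∈ Set.Icc (0:ℝ) 1, V x ≥ A x y + V y - m)
    (D : Set ℝ) (hD : D ⊆ Set.Icc 0 1) (Y : ℝ → ℝ)
    (hY : ∀ x ∈ D, Y x ∈ Set.Icc (0:ℝ) 1 ∧ V x = A x (Y x) + V (Y x) - m) :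
    ∀ x ∈ D, ∀ x' ∈ D, x ≤ x' → Y x ≤ Y x' := by
  intro x hx x' hx' hxx
  by_contra! hY_anti
  obtain ⟨hYx, hcal⟩ := hY x hx
  obtain ⟨hYx', hcal'⟩ := hY x' hx'
  have hlt : x < x' := hxx.lt_of_ne (by rintro rfl; exact hY_anti.false)
  have hsupermod := add_lt_add_of_mixed_deriv_pos
    (differentiable_apply_of_contDiff_uncurry hA two_ne_zero) (convex_Icc 0 1) (convex_Icc 0 1)
    htwist (hD hx) (hD hx') hYx hYx' hlt hY_anti
  linarith [hsub x (hD hx) (Y x') hYx', hsub x' (hD hx') (Y x) hYx]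

/-- under the twist condition ∂²A/∂x∂y > 0, the map x ↦ y(x) assigning
to x the (unique) maximizer in the calibration equation of a calibrated
backward-subaction V̄ is monotone nondecreasing. -/
theorem stmt16 (A : ℝ → ℝ → ℝ) (hA : ContDiff ℝ 2 (Function.uncurry A))
    (htwist : ∀ x ∈ Set.Icc (0:ℝ) 1, ∀ y ∈ Set.Icc (0:ℝ) 1,
      0 < deriv (fun y' => deriv (fun x' => A x' y') x) y)
    (m : ℝ) (V : ℝ → ℝ) (hV : ContinuousOn V (Set.Icc 0 1))
    (hsub : ∀ x ∈ Set.Icc (0:ℝ) 1, ∀ y ∈ Set.Icc (0:ℝ) 1, V x ≥ A x y + V y - m)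
    (D : Set ℝ) (hD : D ⊆ Set.Icc 0 1) (Y : ℝ → ℝ)
    (hY : ∀ x ∈ D, Y x ∈ Set.Icc (0:ℝ) 1 ∧ V x = A x (Y x) + V (Y x) - m)
    (huniq : ∀ x ∈ D, ∀ y ∈ Set.Icc (0:ℝ) 1, V x = A x y + V y - m → y = Y x) :
    ∀ x ∈ D, ∀ x' ∈ D, x ≤ x' → Y x ≤ Y x' :=
  stmt16_general A hA htwist m V hsub D hD Y hY
end

section
/- Let A : [0,1]² → ℝ be α-Hölder continuous with Hölder constant Hol_α(A), m = max_{ν∈M}∫Adν, and define the Mañé potential S(x,y) = inf_k inf over k-paths (x₁,…,x_k) with x₁=x, x_k=y of −Σ_{i=1}^{k−1}(A−m)(x_i,x_{i+1}). Then for every fixed x, the function y ↦ S(x,y) is α-Hölder with constant Hol_α(A), uniformly in x. -/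
/-
Changing the endpoint of a path from `y` to `z` changes only its last step `(w, y)` into
`(w, z)`, which by Hölder continuity of `A` in its second variable costs at most
`C |y - z|^α`. So every path value for `(x, y)` is matched, up to `C |y - z|^α`, by one for
`(x, z)` and vice versa, and the two infima differ by at most that much.
-/

open MeasureTheory unitInterval

/-- sums over k-paths from x to y, inside [0,1], of -Σ (A - m) -/
def pathSet (A : ℝ → ℝ → ℝ) (m x y : ℝ) : Set ℝ :=
  {s | ∃ k : ℕ, 2 ≤ k ∧ ∃ p : ℕ → ℝ, p 0 = x ∧ p (k - 1) = y ∧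
    (∀ i < k, p i ∈ Set.Icc (0:ℝ) 1) ∧
    s = -∑ i ∈ Finset.range (k - 1), (A (p i) (p (i + 1)) - m)}

/-- the Mañé potential S(x,y) -/
noncomputable def manePot (A : ℝ → ℝ → ℝ) (m x y : ℝ) : ℝ := sInf (pathSet A m x y)

/-- The junk value `sInf S = 0` of an unbounded set is harmless here: if one set is bounded
below, so is the other, and otherwise both infima are `0`. -/
lemma Real.abs_sInf_sub_sInf_le {S T : Set ℝ} {ε : ℝ} (hε : 0 ≤ ε)
    (hS : S.Nonempty) (hT : T.Nonempty)
    (hST : ∀ s ∈ S, ∃ t ∈ T, t ≤ s + ε) (hTS : ∀ t ∈ T, ∃ s ∈ S, s ≤ t + ε) :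
    |sInf S - sInf T| ≤ ε := by
  have bdd_of_bdd : ∀ {U V : Set ℝ}, (∀ u ∈ U, ∃ v ∈ V, v ≤ u + ε) →
      BddBelow V → BddBelow U := by
    rintro U V hUV ⟨b, hb⟩
    refine ⟨b - ε, fun u hu => ?_⟩
    obtain ⟨v, hv, hvu⟩ := hUV u hu
    linarith [hb hv]
  have sInf_le_of_bdd : ∀ {U V : Set ℝ}, U.Nonempty → (∀ u ∈ U, ∃ v ∈ V, v ≤ u + ε) →
      BddBelow V → sInf V ≤ sInf U + ε := by
    intro U V hU hUV hV
    rw [← sub_le_iff_le_add]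
    refine le_csInf hU fun u hu => ?_
    obtain ⟨v, hv, hvu⟩ := hUV u hu
    linarith [csInf_le hV hv]
  by_cases hSb : BddBelow S
  · have hTb : BddBelow T := bdd_of_bdd hTS hSb
    have h₁ := sInf_le_of_bdd hS hST hTb
    have h₂ := sInf_le_of_bdd hT hTS hSb
    rw [abs_le]
    constructor <;> linarith
  · have hTb : ¬BddBelow T := fun h => hSb (bdd_of_bdd hST h)
    simpa [Real.sInf_of_not_bddBelow hSb, Real.sInf_of_not_bddBelow hTb] using hε

lemma pathSet_nonempty (A : ℝ → ℝ → ℝ) (m : ℝ) {x y : ℝ}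
    (hx : x ∈ Set.Icc (0:ℝ) 1) (hy : y ∈ Set.Icc (0:ℝ) 1) :
    (pathSet A m x y).Nonempty := by
  refine ⟨-(A x y - m), 2, le_rfl, fun i => if i = 0 then x else y, by simp, by simp, ?_, by simp⟩
  intro i _
  dsimp only
  split_ifs
  exacts [hx, hy]

lemma exists_mem_pathSet_le_of_endpoint (A : ℝ → ℝ → ℝ) (m : ℝ) {x y z ε : ℝ}
    (hz : z ∈ Set.Icc (0:ℝ) 1) (hA : ∀ w ∈ Set.Icc (0:ℝ) 1, A w y - A w z ≤ ε) :
    ∀ s ∈ pathSet A m x y, ∃ s' ∈ pathSet A m x z, s' ≤ s + ε := by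
  rintro s ⟨k, hk, p, hp0, hpy, hpI, rfl⟩
  obtain ⟨n, rfl⟩ : ∃ n, k = n + 2 := ⟨k - 2, by omega⟩
  replace hpy : p (n + 1) = y := hpy
  set q := Function.update p (n + 1) z
  have hq : ∀ i ≤ n, q i = p i := fun i hi => Function.update_of_ne (by omega) _ _
  have hqz : q (n + 1) = z := Function.update_self ..
  refine ⟨_, ⟨n + 2, hk, q, by rw [hq 0 n.zero_le, hp0], hqz, ?_, rfl⟩, ?_⟩
  · intro i hi
    by_cases h : i = n + 1
    · simpa [q, h] using hz
    · simpa [q, h] using hpI i hi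
  · have hfirst : ∑ i ∈ Finset.range n, (A (q i) (q (i + 1)) - m)
        = ∑ i ∈ Finset.range n, (A (p i) (p (i + 1)) - m) :=
      Finset.sum_congr rfl fun i hi => by
        rw [Finset.mem_range] at hi
        rw [hq i hi.le, hq (i + 1) hi]
    have hlast := hA (p n) (hpI n (by omega))
    show -∑ i ∈ Finset.range (n + 1), (A (q i) (q (i + 1)) - m)
      ≤ -∑ i ∈ Finset.range (n + 1), (A (p i) (p (i + 1)) - m) + ε
    rw [Finset.sum_range_succ, Finset.sum_range_succ, hfirst, hq n le_rfl, hpy, hqz]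
    linarith

theorem stmt17_general (A : ℝ → ℝ → ℝ) (α C : ℝ)
    (hHol : ∀ x ∈ Set.Icc (0:ℝ) 1, ∀ y ∈ Set.Icc (0:ℝ) 1, ∀ x' ∈ Set.Icc (0:ℝ) 1,
      ∀ y' ∈ Set.Icc (0:ℝ) 1,
      |A x y - A x' y'| ≤ C * (max |x - x'| |y - y'|) ^ α)
    (m : ℝ) :
    ∀ x ∈ Set.Icc (0:ℝ) 1, ∀ y ∈ Set.Icc (0:ℝ) 1, ∀ z ∈ Set.Icc (0:ℝ) 1,
      |manePot A m x y - manePot A m x z| ≤ C * |y - z| ^ α := by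
  intro x hx y hy z hz
  have hHol_snd : ∀ w ∈ Set.Icc (0:ℝ) 1, ∀ u ∈ Set.Icc (0:ℝ) 1, ∀ v ∈ Set.Icc (0:ℝ) 1,
      A w u - A w v ≤ C * |u - v| ^ α := fun w hw u hu v hv =>
    (le_abs_self _).trans (by simpa using hHol w hw u hu w hw v hv)
  have hε : 0 ≤ C * |y - z| ^ α := by
    simpa using (abs_nonneg _).trans (hHol x hx y hy x hx z hz)
  exact Real.abs_sInf_sub_sInf_le hε (pathSet_nonempty A m hx hy) (pathSet_nonempty A m hx hz)
    (exists_mem_pathSet_le_of_endpoint A m hz (hHol_snd · · y hy z hz))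
    (exists_mem_pathSet_le_of_endpoint A m hy fun w hw => abs_sub_comm y z ▸ hHol_snd w hw z hz y hy)

/-- if A is α-Hölder with constant C, then y ↦ S(x,y) is α-Hölder with
the same constant C, uniformly in x. -/
theorem stmt17 (A : ℝ → ℝ → ℝ) (α C : ℝ) (hα : 0 < α ∧ α ≤ 1) (hC : 0 ≤ C)
    (hHol : ∀ x ∈ Set.Icc (0:ℝ) 1, ∀ y ∈ Set.Icc (0:ℝ) 1, ∀ x' ∈ Set.Icc (0:ℝ) 1,
      ∀ y' ∈ Set.Icc (0:ℝ) 1,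
      |A x y - A x' y'| ≤ C * (max |x - x'| |y - y'|) ^ α)
    (m : ℝ)
    (hm : IsGreatest {r : ℝ | ∃ ν : ProbabilityMeasure (I × I),
        (∀ f : C(I, ℝ), ∫ p, (f p.1 - f p.2) ∂(ν : Measure (I × I)) = 0) ∧
        r = ∫ p, A p.1 p.2 ∂(ν : Measure (I × I))} m) :
    ∀ x ∈ Set.Icc (0:ℝ) 1, ∀ y ∈ Set.Icc (0:ℝ) 1, ∀ z ∈ Set.Icc (0:ℝ) 1,
      |manePot A m x y - manePot A m x z| ≤ C * |y - z| ^ α :=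
  stmt17_general A α C hHol m
end

section
/- Let A : [0,1]² → ℝ be continuous, m = max_{ν∈M}∫Adν, and u : [0,1] → ℝ continuous with u(x) ≥ A(x,y) + u(y) − m for all x,y (backward subaction). Then for every x in the non-wandering set Ω(A), max_y { u(y) − u(x) + A(x,y) } = m. -/
open MeasureTheory unitInterval

/-- x is non-wandering for A (with maximal ergodic value m) -/
def nonWandering (A : ℝ → ℝ → ℝ) (m x : ℝ) : Prop :=
  x ∈ Set.Icc (0:ℝ) 1 ∧ ∀ ε > 0, ∃ k : ℕ, 2 ≤ k ∧ ∃ p : ℕ → ℝ,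
    p 0 = x ∧ p (k - 1) = x ∧ (∀ i < k, p i ∈ Set.Icc (0:ℝ) 1) ∧
    |∑ i ∈ Finset.range (k - 1), (A (p i) (p (i + 1)) - m)| < ε

/-!
A backward subaction `u` makes every step of a path pay a nonnegative deficit
`u x - u y - (A x y - m)`, and along a closed path the `u`-terms telescope away, so the
total deficit of a cycle is minus its `(A - m)`-sum. At a non-wandering point `x` there are
cycles through `x` whose `(A - m)`-sum is arbitrarily small, so the deficit of their first step
`x → y` is arbitrarily small: `u y - u x + A x y` comes arbitrarily close to `m` while never
exceeding it. Compactness of `[0,1]` turns this supremum into a maximum.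
-/

section Subaction

variable {α : Type*} (A : α → α → ℝ) (u : α → ℝ) (m : ℝ)

theorem sum_sub_eq_neg_sum_deficit_of_closed (p : ℕ → α) (n : ℕ) (hp : p 0 = p n) :
    ∑ i ∈ Finset.range n, (A (p i) (p (i + 1)) - m) =
      -∑ i ∈ Finset.range n, (u (p i) - u (p (i + 1)) - (A (p i) (p (i + 1)) - m)) := by
  have htel : ∑ i ∈ Finset.range n, (u (p i) - u (p (i + 1))) = 0 := by
    rw [Finset.sum_range_sub' (fun i => u (p i)), hp, sub_self]
  rw [Finset.sum_sub_distrib (f := fun i => u (p i) - u (p (i + 1))), htel]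
  ring

theorem deficit_le_neg_sum_of_closed {S : Set α}
    (hsub : ∀ x ∈ S, ∀ y ∈ S, u x ≥ A x y + u y - m)
    (p : ℕ → α) (n : ℕ) (hn : 0 < n) (hp : p 0 = p n) (hpS : ∀ i ≤ n, p i ∈ S) :
    u (p 0) - u (p 1) - (A (p 0) (p 1) - m) ≤
      -∑ i ∈ Finset.range n, (A (p i) (p (i + 1)) - m) := by
  rw [sum_sub_eq_neg_sum_deficit_of_closed A u m p n hp, neg_neg]
  refine Finset.single_le_sum (f := fun i => u (p i) - u (p (i + 1)) - (A (p i) (p (i + 1)) - m))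
    (fun i hi => ?_) (Finset.mem_range.2 hn)
  have hi := Finset.mem_range.1 hi
  linarith [hsub (p i) (hpS i hi.le) (p (i + 1)) (hpS (i + 1) hi)]

end Subaction

theorem IsCompact.isGreatest_image_of_forall_sub_lt {α : Type*} [TopologicalSpace α]
    {K : Set α} (hK : IsCompact K) {f : α → ℝ} (hf : ContinuousOn f K) {m : ℝ}
    (hle : ∀ y ∈ K, f y ≤ m) (happrox : ∀ ε > 0, ∃ y ∈ K, m - ε < f y) :
    IsGreatest (f '' K) m := by
  obtain ⟨y, hy, -⟩ := happrox 1 one_pos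
  obtain ⟨y₀, hy₀, hmax⟩ := hK.exists_isMaxOn ⟨y, hy⟩ hf
  have hge : m ≤ f y₀ := le_of_forall_pos_lt_add fun ε hε => by
    obtain ⟨z, hz, hlt⟩ := happrox ε hε
    linarith [isMaxOn_iff.mp hmax z hz]
  refine ⟨⟨y₀, hy₀, le_antisymm (hle y₀ hy₀) hge⟩, ?_⟩
  rintro _ ⟨y, hy, rfl⟩
  exact hle y hy

theorem nonWandering.exists_sub_lt {A : ℝ → ℝ → ℝ} {m x : ℝ} (hx : nonWandering A m x)
    {u : ℝ → ℝ} (hsub : ∀ x ∈ Set.Icc (0:ℝ) 1, ∀ y ∈ Set.Icc (0:ℝ) 1, u x ≥ A x y + u y - m)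
    {ε : ℝ} (hε : 0 < ε) :
    ∃ y ∈ Set.Icc (0:ℝ) 1, m - ε < u y - u x + A x y := by
  obtain ⟨k, hk, p, hp0, hpk, hpI, hsum⟩ := hx.2 ε hε
  have hdef := deficit_le_neg_sum_of_closed A u m hsub p (k - 1) (by omega)
    (hp0.trans hpk.symm) (fun i hi => hpI i (by omega))
  refine ⟨p 1, hpI 1 (by omega), ?_⟩
  rw [hp0] at hdef
  linarith [neg_abs_le (∑ i ∈ Finset.range (k - 1), (A (p i) (p (i + 1)) - m))]

theorem stmt18_general (A : ℝ → ℝ → ℝ)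
    (hAc : ContinuousOn (fun p : ℝ × ℝ => A p.1 p.2) (Set.Icc 0 1 ×ˢ Set.Icc 0 1))
    (m : ℝ)
    (u : ℝ → ℝ) (hu : ContinuousOn u (Set.Icc 0 1))
    (hsub : ∀ x ∈ Set.Icc (0:ℝ) 1, ∀ y ∈ Set.Icc (0:ℝ) 1, u x ≥ A x y + u y - m) :
    ∀ x : ℝ, nonWandering A m x →
      IsGreatest {r : ℝ | ∃ y ∈ Set.Icc (0:ℝ) 1, r = u y - u x + A x y} m := by
  intro x hx
  have hf : ContinuousOn (fun y => u y - u x + A x y) (Set.Icc 0 1) :=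
    (hu.sub continuousOn_const).add <| hAc.comp (continuous_const.prodMk continuous_id).continuousOn
      fun y hy => Set.mk_mem_prod hx.1 hy
  have hle : ∀ y ∈ Set.Icc (0:ℝ) 1, u y - u x + A x y ≤ m := fun y hy => by
    linarith [hsub x hx.1 y hy]
  have hmax := isCompact_Icc.isGreatest_image_of_forall_sub_lt hf hle
    fun ε hε => hx.exists_sub_lt hsub hε
  simpa only [Set.image, eq_comm] using hmax

/-- for every backward subaction u and every x in the non-wandering set
Ω(A), max_y { u(y) - u(x) + A(x,y) } = m. -/
theorem stmt18 (A : ℝ → ℝ → ℝ)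
    (hAc : ContinuousOn (fun p : ℝ × ℝ => A p.1 p.2) (Set.Icc 0 1 ×ˢ Set.Icc 0 1))
    (m : ℝ)
    (hm : IsGreatest {r : ℝ | ∃ ν : ProbabilityMeasure (I × I),
        (∀ f : C(I, ℝ), ∫ p, (f p.1 - f p.2) ∂(ν : Measure (I × I)) = 0) ∧
        r = ∫ p, A p.1 p.2 ∂(ν : Measure (I × I))} m)
    (u : ℝ → ℝ) (hu : ContinuousOn u (Set.Icc 0 1))
    (hsub : ∀ x ∈ Set.Icc (0:ℝ) 1, ∀ y ∈ Set.Icc (0:ℝ) 1, u x ≥ A x y + u y - m) :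
    ∀ x : ℝ, nonWandering A m x →
      IsGreatest {r : ℝ | ∃ y ∈ Set.Icc (0:ℝ) 1, r = u y - u x + A x y} m :=
  stmt18_general A hAc m u hu hsub
end

section
/- Let A : [0,1]² → ℝ be α-Hölder continuous and m = max_{ν∈M}∫Adν. Then there exists a continuous backward subaction u : [0,1] → ℝ that is separating: max_y { u(y) − u(x) + A(x,y) } = m if and only if x ∈ Ω(A). -/
/-!
Write `c = A - m`. The empirical measure of a closed path is holonomic, so every cycle has
nonpositive `c`-cost. Hence Mañé's potential `S_w(x)`, the supremum of the `c`-cost of paths from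
`w` to `x`, is finite, satisfies `S_w(x) + c(x,y) ≤ S_w(y)`, and is `α`-Hölder in `x` and in `w`.
Averaging `-S_{b j}` with weights `2⁻ʲ⁻¹` over a dense sequence `b` gives a Hölder subaction `u`.
A point `x` is non-wandering iff `S_x(x) = 0`. If `S_x(x) < 0`, then for `b j` close to `x`,
`S_{b j}(y) - S_{b j}(x) > c(x,y)` for every `y`, so no `y` is tight for `u` at `x`. If
`S_x(x) = 0`, the first steps of cycles at `x` with cost near `0` are nearly tight for `u`, and
compactness of `[0,1]` yields an exactly tight `y`.
-/

open MeasureTheory unitInterval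

open Filter Topology Set
open scoped ENNReal

namespace Subaction

section ManePotential

variable {X : Type*} (s : Set X) (c : X → X → ℝ)

def chainSum (p : ℕ → X) (n : ℕ) : ℝ := ∑ i ∈ Finset.range n, c (p i) (p (i + 1))

def IsPath (p : ℕ → X) (n : ℕ) (w x : X) : Prop :=
  0 < n ∧ p 0 = w ∧ p n = x ∧ ∀ i ≤ n, p i ∈ s

def pathValues (w x : X) : Set ℝ := {r | ∃ p n, IsPath s p n w x ∧ chainSum c p n = r}

/-- Mañé's potential `S_w(x)` for the cost `c = A - m`. -/
noncomputable def manePotential (w x : X) : ℝ := sSup (pathValues s c w x)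

def CyclesNonpos : Prop := ∀ p n x, IsPath s p n x x → chainSum c p n ≤ 0

variable {s c}

lemma chainSum_succ (p : ℕ → X) (n : ℕ) :
    chainSum c p (n + 1) = chainSum c p n + c (p n) (p (n + 1)) :=
  Finset.sum_range_succ _ _

lemma chainSum_succ' (p : ℕ → X) (n : ℕ) :
    chainSum c p (n + 1) = chainSum c (fun i => p (i + 1)) n + c (p 0) (p 1) :=
  Finset.sum_range_succ' _ _

lemma chainSum_congr {p q : ℕ → X} {n : ℕ} (h : ∀ i ≤ n, p i = q i) :
    chainSum c p n = chainSum c q n :=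
  Finset.sum_congr rfl fun i hi => by
    rw [Finset.mem_range] at hi
    rw [h i hi.le, h (i + 1) hi]

lemma single_mem_pathValues {w x : X} (hw : w ∈ s) (hx : x ∈ s) :
    c w x ∈ pathValues s c w x := by
  refine ⟨fun i => if i = 0 then w else x, 1, ⟨one_pos, rfl, rfl, fun i _ => ?_⟩,
    by simp [chainSum]⟩
  dsimp only
  split_ifs
  exacts [hw, hx]

lemma pathValues_nonempty {w x : X} (hw : w ∈ s) (hx : x ∈ s) : (pathValues s c w x).Nonempty :=
  ⟨_, single_mem_pathValues hw hx⟩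

lemma update_mem {p : ℕ → X} {n k : ℕ} {z : X} (hp : ∀ i ≤ n, i ≠ k → p i ∈ s) (hz : z ∈ s) :
    ∀ i ≤ n, Function.update p k z i ∈ s := by
  intro i hi
  rcases eq_or_ne i k with rfl | hne
  · simpa using hz
  · rw [Function.update_of_ne hne]
    exact hp i hi hne

lemma add_mem_pathValues {w x z : X} {r : ℝ} (hr : r ∈ pathValues s c w x) (hz : z ∈ s) :
    r + c x z ∈ pathValues s c w z := by
  obtain ⟨p, n, ⟨hn, hp0, hpn, hps⟩, rfl⟩ := hr
  refine ⟨Function.update p (n + 1) z, n + 1, ⟨n.succ_pos, ?_, by simp,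
    update_mem (fun i hi hne => hps i (by omega)) hz⟩, ?_⟩
  · rwa [Function.update_of_ne (by omega)]
  · rw [chainSum_succ, chainSum_congr fun i hi => Function.update_of_ne (by omega) z p,
      Function.update_self, Function.update_of_ne (by omega), hpn]

lemma le_neg_of_mem_pathValues (hc : CyclesNonpos s c) {w x : X} {r : ℝ} (hw : w ∈ s)
    (hr : r ∈ pathValues s c w x) : r ≤ -c x w := by
  obtain ⟨p, n, hp, hr'⟩ := add_mem_pathValues hr hw
  linarith [hc p n w hp]

lemma bddAbove_pathValues (hc : CyclesNonpos s c) {w x : X} (hw : w ∈ s) :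
    BddAbove (pathValues s c w x) :=
  ⟨-c x w, fun _ hr => le_neg_of_mem_pathValues hc hw hr⟩

lemma chainSum_le_manePotential (hc : CyclesNonpos s c) {p : ℕ → X} {n : ℕ} {w x : X}
    (hw : w ∈ s) (hp : IsPath s p n w x) : chainSum c p n ≤ manePotential s c w x :=
  le_csSup (bddAbove_pathValues hc hw) ⟨p, n, hp, rfl⟩

lemma le_manePotential (hc : CyclesNonpos s c) {w x : X} (hw : w ∈ s) (hx : x ∈ s) :
    c w x ≤ manePotential s c w x :=
  le_csSup (bddAbove_pathValues hc hw) (single_mem_pathValues hw hx)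

lemma manePotential_le (hc : CyclesNonpos s c) {w x : X} (hw : w ∈ s) (hx : x ∈ s) :
    manePotential s c w x ≤ -c x w :=
  csSup_le (pathValues_nonempty hw hx) fun _ hr => le_neg_of_mem_pathValues hc hw hr

lemma abs_manePotential_le (hc : CyclesNonpos s c) {K : ℝ} (hK : ∀ x ∈ s, ∀ y ∈ s, |c x y| ≤ K)
    {w x : X} (hw : w ∈ s) (hx : x ∈ s) : |manePotential s c w x| ≤ K := by
  have := le_manePotential hc hw hx
  have := manePotential_le hc hw hx
  rw [abs_le]
  constructor <;> linarith [abs_le.1 (hK w hw x hx), abs_le.1 (hK x hx w hw)]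

lemma manePotential_add_le (hc : CyclesNonpos s c) {w x y : X} (hw : w ∈ s) (hx : x ∈ s)
    (hy : y ∈ s) : manePotential s c w x + c x y ≤ manePotential s c w y := by
  have : manePotential s c w x ≤ manePotential s c w y - c x y :=
    csSup_le (pathValues_nonempty hw hx) fun _ hr =>
      le_sub_iff_add_le.2 (le_csSup (bddAbove_pathValues hc hw) (add_mem_pathValues hr hy))
  linarith

lemma manePotential_le_of_target (hc : CyclesNonpos s c) {w x x' : X} {δ : ℝ} (hw : w ∈ s)
    (hx : x ∈ s) (hx' : x' ∈ s) (hδ : ∀ a ∈ s, c a x ≤ c a x' + δ) :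
    manePotential s c w x ≤ manePotential s c w x' + δ := by
  refine csSup_le (pathValues_nonempty hw hx) ?_
  rintro _ ⟨p, n, ⟨hn, hp0, hpn, hps⟩, rfl⟩
  obtain ⟨n, rfl⟩ : ∃ k, n = k + 1 := ⟨n - 1, by omega⟩
  have hq : IsPath s (Function.update p (n + 1) x') (n + 1) w x' :=
    ⟨hn, by rwa [Function.update_of_ne (by omega)], by simp,
      update_mem (fun i hi _ => hps i hi) hx'⟩
  have hqs : chainSum c (Function.update p (n + 1) x') (n + 1) = chainSum c p n + c (p n) x' := by
    rw [chainSum_succ, chainSum_congr fun i hi => Function.update_of_ne (by omega) x' p,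
      Function.update_self, Function.update_of_ne (by omega)]
  have := chainSum_le_manePotential hc hw hq
  rw [chainSum_succ, hpn]
  linarith [hδ (p n) (hps n (by omega))]

lemma manePotential_le_of_source (hc : CyclesNonpos s c) {w w' x : X} {δ : ℝ} (hw : w ∈ s)
    (hw' : w' ∈ s) (hx : x ∈ s) (hδ : ∀ z ∈ s, c w z ≤ c w' z + δ) :
    manePotential s c w x ≤ manePotential s c w' x + δ := by
  refine csSup_le (pathValues_nonempty hw hx) ?_
  rintro _ ⟨p, n, ⟨hn, hp0, hpn, hps⟩, rfl⟩
  obtain ⟨n, rfl⟩ : ∃ k, n = k + 1 := ⟨n - 1, by omega⟩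
  have hq : IsPath s (Function.update p 0 w') (n + 1) w' x :=
    ⟨hn, by simp, by rwa [Function.update_of_ne (by omega)],
      update_mem (fun i hi _ => hps i hi) hw'⟩
  have hqs : chainSum c (Function.update p 0 w') (n + 1) =
      chainSum c (fun i => p (i + 1)) n + c w' (p 1) := by
    simp [chainSum_succ']
  have := chainSum_le_manePotential hc hw' hq
  rw [chainSum_succ', hp0]
  linarith [hδ (p 1) (hps 1 (by omega))]

lemma abs_manePotential_sub_le (hc : CyclesNonpos s c) {w x y : X} {δ : ℝ} (hw : w ∈ s)
    (hx : x ∈ s) (hy : y ∈ s) (hδ : ∀ a ∈ s, |c a x - c a y| ≤ δ) :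
    |manePotential s c w x - manePotential s c w y| ≤ δ := by
  have h₁ := manePotential_le_of_target hc hw hx hy fun a ha => by linarith [abs_le.1 (hδ a ha)]
  have h₂ := manePotential_le_of_target hc hw hy hx fun a ha => by linarith [abs_le.1 (hδ a ha)]
  rw [abs_le]
  constructor <;> linarith

lemma exists_sub_sub_lt_of_nonneg {u : X → ℝ}
    (hu : ∀ x ∈ s, ∀ y ∈ s, c x y ≤ u x - u y) {x : X} (hx : x ∈ s)
    (hR : 0 ≤ manePotential s c x x) {ε : ℝ} (hε : 0 < ε) :
    ∃ y ∈ s, u x - u y - c x y < ε := by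
  obtain ⟨_, ⟨p, n, ⟨hn, hp0, hpn, hps⟩, rfl⟩, hlt⟩ :=
    exists_lt_of_lt_csSup (pathValues_nonempty hx hx) (by linarith : -ε < manePotential s c x x)
  refine ⟨p 1, hps 1 hn, ?_⟩
  have htel : ∑ i ∈ Finset.range n, (u (p i) - u (p (i + 1)) - c (p i) (p (i + 1))) =
      -chainSum c p n := by
    rw [Finset.sum_sub_distrib, Finset.sum_range_sub' (fun i => u (p i)), hp0, hpn, sub_self,
      zero_sub, chainSum]
  have hfirst := Finset.single_le_sum
    (f := fun i => u (p i) - u (p (i + 1)) - c (p i) (p (i + 1)))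
    (fun i hi => sub_nonneg.2 (hu _ (hps i (Finset.mem_range.1 hi).le) _
      (hps (i + 1) (Finset.mem_range.1 hi)))) (Finset.mem_range.2 hn)
  simp only [zero_add, hp0] at hfirst
  linarith

end ManePotential

noncomputable def geomAvg (f : ℕ → ℝ) : ℝ := ∑' j, f j / 2 / 2 ^ j

section GeomAvg

variable {f g : ℕ → ℝ} {K L : ℝ}

lemma summable_geomAvg (hf : ∀ j, |f j| ≤ K) : Summable fun j => f j / 2 / 2 ^ j :=
  (summable_geometric_two' K).of_norm_bounded fun j => by
    rw [Real.norm_eq_abs, abs_div, abs_div, abs_two, abs_of_pos (by positivity : (0:ℝ) < 2 ^ j)]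
    gcongr
    exact hf j

lemma geomAvg_const (a : ℝ) : geomAvg (fun _ => a) = a := tsum_geometric_two' a

lemma geomAvg_sub (hf : ∀ j, |f j| ≤ K) (hg : ∀ j, |g j| ≤ L) :
    geomAvg f - geomAvg g = geomAvg fun j => f j - g j := by
  rw [geomAvg, geomAvg, geomAvg, ← (summable_geomAvg hf).tsum_sub (summable_geomAvg hg)]
  congr 1 with j
  ring

lemma geomAvg_mono (hf : ∀ j, |f j| ≤ K) (hg : ∀ j, |g j| ≤ L) (h : ∀ j, f j ≤ g j) :
    geomAvg f ≤ geomAvg g :=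
  Summable.tsum_le_tsum (fun j => by gcongr; exact h j) (summable_geomAvg hf) (summable_geomAvg hg)

lemma geomAvg_lt (hf : ∀ j, |f j| ≤ K) (hg : ∀ j, |g j| ≤ L) (h : ∀ j, f j ≤ g j) {i : ℕ}
    (hi : f i < g i) : geomAvg f < geomAvg g :=
  Summable.tsum_lt_tsum (i := i) (fun j => by gcongr; exact h j) (by gcongr)
    (summable_geomAvg hf) (summable_geomAvg hg)

end GeomAvg

section WeightedPotential

variable {X : Type*} (s : Set X) (c : X → X → ℝ)

noncomputable def weightedPotential (b : ℕ → X) (x : X) : ℝ :=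
  geomAvg fun j => -manePotential s c (b j) x

variable {s c} {b : ℕ → X} {K : ℝ}

lemma abs_manePotential_sub_manePotential_le (hc : CyclesNonpos s c)
    (hK : ∀ x ∈ s, ∀ y ∈ s, |c x y| ≤ K) {w x y : X} (hw : w ∈ s) (hx : x ∈ s) (hy : y ∈ s) :
    |manePotential s c w y - manePotential s c w x| ≤ K + K :=
  (abs_sub _ _).trans
    (add_le_add (abs_manePotential_le hc hK hw hy) (abs_manePotential_le hc hK hw hx))

lemma weightedPotential_sub (hc : CyclesNonpos s c) (hK : ∀ x ∈ s, ∀ y ∈ s, |c x y| ≤ K)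
    (hb : ∀ j, b j ∈ s) {x y : X} (hx : x ∈ s) (hy : y ∈ s) :
    weightedPotential s c b x - weightedPotential s c b y =
      geomAvg fun j => manePotential s c (b j) y - manePotential s c (b j) x := by
  rw [weightedPotential, weightedPotential,
    geomAvg_sub (fun j => (abs_neg _).trans_le (abs_manePotential_le hc hK (hb j) hx))
      (fun j => (abs_neg _).trans_le (abs_manePotential_le hc hK (hb j) hy))]
  congr 1 with j
  ring

lemma le_weightedPotential_sub (hc : CyclesNonpos s c) (hK : ∀ x ∈ s, ∀ y ∈ s, |c x y| ≤ K)
    (hb : ∀ j, b j ∈ s) {x y : X} (hx : x ∈ s) (hy : y ∈ s) :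
    c x y ≤ weightedPotential s c b x - weightedPotential s c b y := by
  rw [weightedPotential_sub hc hK hb hx hy, ← geomAvg_const (c x y)]
  exact geomAvg_mono (fun _ => le_rfl)
    (fun j => abs_manePotential_sub_manePotential_le hc hK (hb j) hx hy)
    fun j => by linarith [manePotential_add_le hc (hb j) hx hy]

lemma abs_weightedPotential_sub_le (hc : CyclesNonpos s c) (hK : ∀ x ∈ s, ∀ y ∈ s, |c x y| ≤ K)
    (hb : ∀ j, b j ∈ s) {x y : X} (hx : x ∈ s) (hy : y ∈ s) {δ : ℝ}
    (hδ : ∀ w ∈ s, |manePotential s c w x - manePotential s c w y| ≤ δ) :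
    |weightedPotential s c b x - weightedPotential s c b y| ≤ δ := by
  have hbd := fun j => abs_manePotential_sub_manePotential_le hc hK (hb j) hx hy
  have hδ' := fun j => abs_le.1 ((abs_sub_comm _ _).trans_le (hδ _ (hb j)))
  rw [weightedPotential_sub hc hK hb hx hy, abs_le]
  constructor
  · rw [← geomAvg_const (-δ)]
    exact geomAvg_mono (fun _ => le_rfl) hbd fun j => (hδ' j).1
  · rw [← geomAvg_const δ]
    exact geomAvg_mono hbd (fun _ => le_rfl) fun j => (hδ' j).2

lemma lt_weightedPotential_sub (hc : CyclesNonpos s c) (hK : ∀ x ∈ s, ∀ y ∈ s, |c x y| ≤ K)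
    (hb : ∀ j, b j ∈ s) {x y : X} (hx : x ∈ s) (hy : y ∈ s) (hR : manePotential s c x x < 0)
    (happrox : ∀ δ > 0, ∃ j, ∀ z ∈ s, |c (b j) z - c x z| ≤ δ) :
    c x y < weightedPotential s c b x - weightedPotential s c b y := by
  obtain ⟨j, hj⟩ := happrox (-manePotential s c x x / 4) (by linarith)
  have h₁ := manePotential_le_of_source (δ := -manePotential s c x x / 4) hc (hb j) hx hx
    fun z hz => by linarith [abs_le.1 (hj z hz)]
  have h₂ := le_manePotential hc (hb j) hy
  rw [weightedPotential_sub hc hK hb hx hy, ← geomAvg_const (c x y)]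
  refine geomAvg_lt (i := j) (fun _ => le_rfl)
    (fun j => abs_manePotential_sub_manePotential_le hc hK (hb j) hx hy)
    (fun j => by linarith [manePotential_add_le hc (hb j) hx hy]) ?_
  linarith [abs_le.1 (hj y hy)]

end WeightedPotential

section Holonomic

variable {X : Type*} [MeasurableSpace X]

noncomputable def pathMeasure (q : ℕ → X) (n : ℕ) : Measure (X × X) :=
  (n : ℝ≥0∞)⁻¹ • ∑ i ∈ Finset.range n, Measure.dirac (q i, q (i + 1))

lemma integral_pathMeasure [MeasurableSingletonClass X] (q : ℕ → X) (n : ℕ) (g : X × X → ℝ) :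
    ∫ z, g z ∂pathMeasure q n = (n : ℝ)⁻¹ * ∑ i ∈ Finset.range n, g (q i, q (i + 1)) := by
  rw [pathMeasure, integral_smul_measure,
    integral_finsetSum_measure fun i _ => integrable_dirac enorm_lt_top,
    ENNReal.toReal_inv, ENNReal.toReal_natCast, smul_eq_mul]
  simp only [integral_dirac]

lemma isProbabilityMeasure_pathMeasure (q : ℕ → X) {n : ℕ} (hn : 0 < n) :
    IsProbabilityMeasure (pathMeasure q n) :=
  ⟨by simp [pathMeasure,
    ENNReal.inv_mul_cancel (Nat.cast_ne_zero.2 hn.ne') (ENNReal.natCast_ne_top n)]⟩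

lemma cyclesNonpos_of_holonomic [MeasurableSingletonClass X] [TopologicalSpace X]
    {A : X → X → ℝ} {m : ℝ}
    (hm : ∀ ν : ProbabilityMeasure (X × X),
      (∀ f : C(X, ℝ), ∫ z, (f z.1 - f z.2) ∂(ν : Measure (X × X)) = 0) →
      ∫ z, A z.1 z.2 ∂(ν : Measure (X × X)) ≤ m) :
    CyclesNonpos univ fun a b => A a b - m := by
  rintro q n x ⟨hn, hq0, hqn, -⟩
  have := isProbabilityMeasure_pathMeasure q hn
  have hA := hm ⟨pathMeasure q n, this⟩ fun f => by
    rw [ProbabilityMeasure.coe_mk, integral_pathMeasure,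
      Finset.sum_range_sub' (fun i => f (q i)), hq0, hqn, sub_self, mul_zero]
  rw [ProbabilityMeasure.coe_mk, integral_pathMeasure, inv_mul_le_iff₀ (by positivity)] at hA
  rw [chainSum, Finset.sum_sub_distrib, Finset.sum_const, Finset.card_range, nsmul_eq_mul]
  linarith

end Holonomic

section UnitInterval

lemma cyclesNonpos_Icc {A : ℝ → ℝ → ℝ} {m : ℝ}
    (h : CyclesNonpos (univ : Set I) fun a b => A a b - m) :
    CyclesNonpos (Icc 0 1) fun a b => A a b - m := by
  rintro p n x ⟨hn, hp0, hpn, hps⟩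
  have := h (fun i => projIcc 0 1 zero_le_one (p i)) n (projIcc 0 1 zero_le_one x)
    ⟨hn, congrArg _ hp0, congrArg _ hpn, fun _ _ => trivial⟩
  convert this using 1
  refine Finset.sum_congr rfl fun i hi => ?_
  rw [Finset.mem_range] at hi
  simp only [projIcc_of_mem _ (hps i hi.le), projIcc_of_mem _ (hps (i + 1) hi)]

lemma nonWandering_iff {A : ℝ → ℝ → ℝ} {m x : ℝ}
    (hc : CyclesNonpos (Icc 0 1) fun a b => A a b - m) (hx : x ∈ Icc (0:ℝ) 1) :
    nonWandering A m x ↔ 0 ≤ manePotential (Icc 0 1) (fun a b => A a b - m) x x := by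
  constructor
  · rintro ⟨-, h⟩
    by_contra! hneg
    obtain ⟨k, hk, p, hp0, hpk, hps, hlt⟩ := h _ (neg_pos.2 hneg)
    have := chainSum_le_manePotential hc hx (p := p) (n := k - 1)
      ⟨by omega, hp0, hpk, fun i hi => hps i (by omega)⟩
    simp only [chainSum] at this
    linarith [neg_abs_le (∑ i ∈ Finset.range (k - 1), (A (p i) (p (i + 1)) - m))]
  · refine fun h => ⟨hx, fun ε hε => ?_⟩
    obtain ⟨_, ⟨p, n, hp, rfl⟩, hlt⟩ := exists_lt_of_lt_csSup (pathValues_nonempty hx hx)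
      (by linarith : -ε < manePotential (Icc 0 1) (fun a b => A a b - m) x x)
    obtain ⟨hn, hp0, hpn, hps⟩ := hp
    refine ⟨n + 1, by omega, p, hp0, hpn, fun i hi => hps i (by omega), ?_⟩
    have hle := hc p n x ⟨hn, hp0, hpn, hps⟩
    simp only [chainSum] at hlt hle
    rw [Nat.add_sub_cancel, abs_lt]
    exact ⟨hlt, by linarith⟩

lemma exists_seq_dense_Icc :
    ∃ b : ℕ → ℝ, (∀ j, b j ∈ Icc (0:ℝ) 1) ∧ ∀ x ∈ Icc (0:ℝ) 1, ∀ η > 0, ∃ j, |b j - x| < η := by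
  obtain ⟨d, hd⟩ := TopologicalSpace.exists_dense_seq I
  refine ⟨fun j => d j, fun j => (d j).2, fun x hx η hη => ?_⟩
  obtain ⟨j, hj⟩ := hd.exists_dist_lt ⟨x, hx⟩ hη
  exact ⟨j, by rwa [Subtype.dist_eq, Real.dist_eq, abs_sub_comm] at hj⟩

lemma tendsto_mul_abs_rpow_zero {C α : ℝ} (hα : 0 < α) :
    Tendsto (fun t : ℝ => C * |t| ^ α) (𝓝 0) (𝓝 0) := by
  have : Continuous fun t : ℝ => C * |t| ^ α :=
    (continuous_abs.rpow_const fun _ => Or.inr hα.le).const_mul C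
  simpa [Real.zero_rpow hα.ne'] using this.tendsto 0

lemma continuousOn_of_abs_sub_le {f : ℝ → ℝ} {s : Set ℝ} {C α : ℝ} (hα : 0 < α)
    (hf : ∀ x ∈ s, ∀ y ∈ s, |f x - f y| ≤ C * |x - y| ^ α) : ContinuousOn f s := by
  intro x hx
  have hlim : Tendsto (fun y => C * |y - x| ^ α) (𝓝[s] x) (𝓝 0) :=
    ((tendsto_mul_abs_rpow_zero hα).comp (tendsto_sub_nhds_zero_iff.2 tendsto_id)).mono_left
      nhdsWithin_le_nhds
  refine tendsto_iff_dist_tendsto_zero.2 (squeeze_zero' (Eventually.of_forall fun _ => dist_nonneg)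
    ?_ hlim)
  filter_upwards [self_mem_nhdsWithin] with y hy
  exact hf y hy x hx

def IsHolderOnSquare (F : ℝ → ℝ → ℝ) (C α : ℝ) : Prop :=
  ∀ x ∈ Icc (0:ℝ) 1, ∀ y ∈ Icc (0:ℝ) 1, ∀ x' ∈ Icc (0:ℝ) 1, ∀ y' ∈ Icc (0:ℝ) 1,
    |F x y - F x' y'| ≤ C * (max |x - x'| |y - y'|) ^ α

namespace IsHolderOnSquare

variable {F : ℝ → ℝ → ℝ} {C α : ℝ}

lemma sub_const (hF : IsHolderOnSquare F C α) (m : ℝ) :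
    IsHolderOnSquare (fun x y => F x y - m) C α := by
  intro x hx y hy x' hx' y' hy'
  simpa only [sub_sub_sub_cancel_right] using hF x hx y hy x' hx' y' hy'

lemma abs_sub_fst_le (hF : IsHolderOnSquare F C α) {x x' y : ℝ} (hx : x ∈ Icc (0:ℝ) 1)
    (hx' : x' ∈ Icc (0:ℝ) 1) (hy : y ∈ Icc (0:ℝ) 1) : |F x y - F x' y| ≤ C * |x - x'| ^ α := by
  simpa using hF x hx y hy x' hx' y hy

lemma abs_sub_snd_le (hF : IsHolderOnSquare F C α) {x y y' : ℝ} (hx : x ∈ Icc (0:ℝ) 1)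
    (hy : y ∈ Icc (0:ℝ) 1) (hy' : y' ∈ Icc (0:ℝ) 1) : |F x y - F x y'| ≤ C * |y - y'| ^ α := by
  simpa using hF x hx y hy x hx y' hy'

lemma abs_apply_le (hF : IsHolderOnSquare F C α) (hα : 0 < α) (hC : 0 ≤ C) :
    ∀ x ∈ Icc (0:ℝ) 1, ∀ y ∈ Icc (0:ℝ) 1, |F x y| ≤ |F 0 0| + C := by
  intro x hx y hy
  have h0 : (0:ℝ) ∈ Icc (0:ℝ) 1 := left_mem_Icc.2 zero_le_one
  have hmax : max |x - 0| |y - 0| ^ α ≤ 1 := by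
    refine Real.rpow_le_one (le_max_of_le_left (abs_nonneg _)) (max_le ?_ ?_) hα.le <;>
      rw [sub_zero, abs_le] <;> constructor <;> linarith [hx.1, hx.2, hy.1, hy.2]
  linarith [abs_sub_abs_le_abs_sub (F x y) (F 0 0),
    (hF x hx y hy 0 h0 0 h0).trans (mul_le_of_le_one_right hC hmax)]

lemma exists_approx (hF : IsHolderOnSquare F C α) (hα : 0 < α) {b : ℕ → ℝ}
    (hb : ∀ x ∈ Icc (0:ℝ) 1, ∀ η > 0, ∃ j, |b j - x| < η) (hbI : ∀ j, b j ∈ Icc (0:ℝ) 1)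
    {x : ℝ} (hx : x ∈ Icc (0:ℝ) 1) {δ : ℝ} (hδ : 0 < δ) :
    ∃ j, ∀ y ∈ Icc (0:ℝ) 1, |F (b j) y - F x y| ≤ δ := by
  obtain ⟨η, hη, hsmall⟩ :=
    Metric.eventually_nhds_iff.1
      ((tendsto_mul_abs_rpow_zero (C := C) hα).eventually (gt_mem_nhds hδ))
  obtain ⟨j, hj⟩ := hb x hx η hη
  exact ⟨j, fun y hy => (hF.abs_sub_fst_le (hbI j) hx hy).trans
    (hsmall (by rwa [Real.dist_eq, sub_zero])).le⟩

end IsHolderOnSquare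

lemma isGreatest_of_continuousOn {β : Type*} [TopologicalSpace β] {s : Set β} {g : β → ℝ} {a : ℝ}
    (hs : IsCompact s) (hne : s.Nonempty) (hg : ContinuousOn g s) (hle : ∀ y ∈ s, g y ≤ a)
    (hlt : ∀ ε > 0, ∃ y ∈ s, a - ε < g y) : IsGreatest {r | ∃ y ∈ s, r = g y} a := by
  obtain ⟨y₀, hy₀, hmax⟩ := hs.exists_isMaxOn hne hg
  refine ⟨⟨y₀, hy₀, le_antisymm (le_of_forall_pos_lt_add fun ε hε => ?_) (hle y₀ hy₀)⟩, ?_⟩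
  · obtain ⟨y, hy, h⟩ := hlt ε hε
    linarith [isMaxOn_iff.1 hmax y hy]
  · rintro _ ⟨y, hy, rfl⟩
    exact hle y hy

end UnitInterval

end Subaction

open Subaction

/-- if A is α-Hölder then there exists a separating backward subaction:
a continuous u with u(x) ≥ A(x,y) + u(y) - m for all x,y, such that
max_y { u(y) - u(x) + A(x,y) } = m iff x ∈ Ω(A). -/
theorem stmt19 (A : ℝ → ℝ → ℝ) (α C : ℝ) (hα : 0 < α ∧ α ≤ 1) (hC : 0 ≤ C)
    (hHol : ∀ x ∈ Set.Icc (0:ℝ) 1, ∀ y ∈ Set.Icc (0:ℝ) 1, ∀ x' ∈ Set.Icc (0:ℝ) 1,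
      ∀ y' ∈ Set.Icc (0:ℝ) 1,
      |A x y - A x' y'| ≤ C * (max |x - x'| |y - y'|) ^ α)
    (m : ℝ)
    (hm : IsGreatest {r : ℝ | ∃ ν : ProbabilityMeasure (I × I),
        (∀ f : C(I, ℝ), ∫ p, (f p.1 - f p.2) ∂(ν : Measure (I × I)) = 0) ∧
        r = ∫ p, A p.1 p.2 ∂(ν : Measure (I × I))} m) :
    ∃ u : ℝ → ℝ, ContinuousOn u (Set.Icc 0 1) ∧
      (∀ x ∈ Set.Icc (0:ℝ) 1, ∀ y ∈ Set.Icc (0:ℝ) 1, u x ≥ A x y + u y - m) ∧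
      (∀ x ∈ Set.Icc (0:ℝ) 1,
        (IsGreatest {r : ℝ | ∃ y ∈ Set.Icc (0:ℝ) 1, r = u y - u x + A x y} m ↔
          nonWandering A m x)) := by
  have hA : IsHolderOnSquare A C α := hHol
  have hAm := hA.sub_const m
  have hc : CyclesNonpos (Icc 0 1) fun a b => A a b - m :=
    cyclesNonpos_Icc (cyclesNonpos_of_holonomic fun ν hν => hm.2 ⟨ν, hν, rfl⟩)
  have hK := hAm.abs_apply_le hα.1 hC
  obtain ⟨b, hbI, hb⟩ := exists_seq_dense_Icc
  set u := weightedPotential (Icc 0 1) (fun a b => A a b - m) b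
  have hsub : ∀ x ∈ Icc (0:ℝ) 1, ∀ y ∈ Icc (0:ℝ) 1, A x y - m ≤ u x - u y :=
    fun x hx y hy => le_weightedPotential_sub hc hK hbI hx hy
  have hu : ContinuousOn u (Icc 0 1) := continuousOn_of_abs_sub_le hα.1 fun x hx y hy =>
    abs_weightedPotential_sub_le hc hK hbI hx hy fun w hw =>
      abs_manePotential_sub_le hc hw hx hy fun a ha => hAm.abs_sub_snd_le ha hx hy
  refine ⟨u, hu, fun x hx y hy => by linarith [hsub x hx y hy], fun x hx => ?_⟩
  rw [nonWandering_iff hc hx]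
  constructor
  · rintro ⟨⟨y, hy, hyu⟩, -⟩
    by_contra! hR
    have := lt_weightedPotential_sub hc hK hbI hx hy hR fun δ hδ =>
      hAm.exists_approx hα.1 hb hbI hx hδ
    linarith
  · intro hR
    refine isGreatest_of_continuousOn isCompact_Icc (nonempty_Icc.2 zero_le_one)
      ((hu.sub continuousOn_const).add (continuousOn_of_abs_sub_le hα.1 fun y hy y' hy' =>
        hA.abs_sub_snd_le hx hy hy')) (fun y hy => by linarith [hsub x hx y hy]) fun ε hε => ?_
    obtain ⟨y, hy, hlt⟩ := exists_sub_sub_lt_of_nonneg hsub hx hR hε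
    exact ⟨y, hy, by linarith⟩
end
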